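/- arXiv:2203.06115 — 5 statements merged into one kernel-verified Lean document; each statement's English description precedes it below -/
import Mathlib

section
/- For any fixed 0 < δ < 1 there exists a constant C > 0 such that for all sufficiently large n ∈ ℕ the following holds: if s = ⌊(1−δ)n⌋ and d ≥ C·n^{1+1/(1−δ)}, then NO n×d matrix M with all entries in {−1,+1} is s-robust over ℝ; that is, every such matrix has some s columns that are linearly dependent over ℝ. -/
open scoped Classical

/-- A matrix is `s`-robust over a field `F` if every `s` of its columns are linearly
independent; equivalently, `M.mulVec a ≠ 0` for every nonzero `a` with support of size
at most `s`. -/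
def Robust {F : Type*} [Field F] {n d : ℕ} (M : Matrix (Fin n) (Fin d) F) (s : ℕ) : Prop :=
  ∀ a : Fin d → F, a ≠ 0 →
    (Finset.univ.filter fun i => a i ≠ 0).card ≤ s → M.mulVec a ≠ 0

/-!
An `s`-robust matrix `M` with `2t ≤ s` has pairwise distinct column sums `∑ i ∈ A, M · i` over the
`t`-subsets `A` of its columns, since `1_A - 1_B` is supported on at most `2t` coordinates. For a
`±1` matrix these `C(d, t)` sums are integer vectors which concentrate: in each row, the sum over a
`t`-subset differs from its mean by `O(√t)` on average, by a variance computation. Weight each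
integer vector by a product of two-sided geometric distributions of scale `√t` centred at the
means. Distinct vectors carry total weight at most `1`, while by Jensen's inequality the `C(d, t)`
sums carry total weight at least `C(d, t) (12 e² √t)⁻ⁿ`; hence `C(d, t) ≤ (12 e² √t)ⁿ`. For
`t = ⌊s / 2⌋ ≈ (1 - δ) n / 2` this contradicts `C(d, t) ≥ (d / 2t)ᵗ` once
`d ≥ exp (12 / (1 - δ)) n^(1 + 1 / (1 - δ))` and `n` is large.
-/

open Finset Real Filter

lemma hasSum_pow_natAbs {ρ : ℝ} (h0 : 0 ≤ ρ) (h1 : ρ < 1) :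
    HasSum (fun k : ℤ => ρ ^ k.natAbs) ((1 + ρ) / (1 - ρ)) := by
  have hgeom := hasSum_geometric_of_lt_one h0 h1
  have h := HasSum.of_nat_of_neg_add_one (f := fun k : ℤ => ρ ^ k.natAbs)
    (by simpa using hgeom) (hgeom.mul_left ρ |>.congr_fun fun n => by
      rw [show (-((n : ℤ) + 1)).natAbs = n + 1 by omega, pow_succ'])
  convert h using 1
  field_simp

lemma sum_exp_neg_mul_abs_sub_le (s : Finset ℤ) (μ : ℝ) {τ : ℝ} (hτ0 : 0 < τ) (hτ1 : τ ≤ 1) :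
    ∑ k ∈ s, exp (-(τ * |k - μ|)) ≤ 12 / τ := by
  have hlt : exp (-τ) < 1 := exp_lt_one_iff.2 (by linarith)
  have hgap : τ / 2 ≤ 1 - exp (-τ) := by
    have h1 := add_one_le_exp τ
    have h2 : exp (-τ) * exp τ = 1 := by rw [← exp_add]; simp
    nlinarith [exp_pos τ, exp_pos (-τ)]
  have hexp : exp (τ / 2) ≤ 3 :=
    (exp_le_exp.2 (by linarith)).trans (by linarith [exp_one_lt_d9] : exp 1 ≤ 3)
  -- rounding the centre to an integer costs a factor `exp (τ / 2)`
  have hround (k : ℤ) :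
      exp (-(τ * |k - μ|)) ≤ exp (τ / 2) * exp (-τ) ^ (k - round μ).natAbs := by
    have := abs_sub_round μ
    have := abs_sub_le (k : ℝ) μ (round μ)
    rw [← exp_nat_mul, ← exp_add, Nat.cast_natAbs, Int.cast_abs, Int.cast_sub]
    gcongr
    nlinarith [abs_sub_comm μ (round μ)]
  have hsum : HasSum (fun k : ℤ => exp (-τ) ^ (k - round μ).natAbs)
      ((1 + exp (-τ)) / (1 - exp (-τ))) :=
    (Equiv.subRight (round μ)).hasSum_iff (f := fun k : ℤ => exp (-τ) ^ k.natAbs) |>.2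
      (hasSum_pow_natAbs (exp_nonneg _) hlt)
  calc ∑ k ∈ s, exp (-(τ * |k - μ|))
      ≤ ∑ k ∈ s, exp (τ / 2) * exp (-τ) ^ (k - round μ).natAbs :=
        sum_le_sum fun k _ => hround k
    _ = exp (τ / 2) * ∑ k ∈ s, exp (-τ) ^ (k - round μ).natAbs := (mul_sum ..).symm
    _ ≤ 3 * ((1 + 1) / (τ / 2)) := by
      gcongr
      refine (sum_le_hasSum s (fun _ _ => by positivity) hsum).trans ?_
      gcongr
    _ = 12 / τ := by ring

lemma card_mul_exp_le_sum_exp {ι : Type*} (s : Finset ι) (f : ι → ℝ) {c : ℝ}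
    (h : #s * c ≤ ∑ i ∈ s, f i) : #s * exp c ≤ ∑ i ∈ s, exp (f i) := by
  have htangent (i : ι) : exp c * (1 + (f i - c)) ≤ exp (f i) := by
    have := add_one_le_exp (f i - c)
    calc exp c * (1 + (f i - c)) ≤ exp c * exp (f i - c) := by gcongr; linarith
      _ = exp (f i) := by rw [← exp_add]; ring_nf
  calc #s * exp c ≤ exp c * (#s + (∑ i ∈ s, f i - #s * c)) := by nlinarith [exp_pos c]
    _ = ∑ i ∈ s, exp c * (1 + (f i - c)) := by
      rw [← mul_sum, sum_add_distrib, sum_sub_distrib]; simp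
    _ ≤ ∑ i ∈ s, exp (f i) := sum_le_sum fun i _ => htangent i

lemma sum_prod_le_prod_sum_image {ι κ : Type*} [Fintype ι] [DecidableEq ι] [DecidableEq κ]
    (X : Finset (ι → κ)) (q : ι → κ → ℝ) (hq : ∀ i k, 0 ≤ q i k) :
    ∑ x ∈ X, ∏ i, q i (x i) ≤ ∏ i, ∑ k ∈ X.image (· i), q i k := by
  rw [prod_univ_sum]
  refine sum_le_sum_of_subset_of_nonneg (fun x hx => ?_)
    fun x _ _ => prod_nonneg fun i _ => hq i _
  exact Fintype.mem_piFinset.2 fun i => mem_image_of_mem _ hx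

theorem card_le_of_injOn_of_sum_abs_sub_le {β ι : Type*} [Fintype ι] [DecidableEq ι]
    {𝒜 : Finset β} {S : β → ι → ℤ} (hS : Set.InjOn S 𝒜) (μ : ι → ℝ) {τ L : ℝ}
    (hτ0 : 0 < τ) (hτ1 : τ ≤ 1) (hL : ∑ A ∈ 𝒜, ∑ j, |(S A j : ℝ) - μ j| ≤ #𝒜 * L) :
    (#𝒜 : ℝ) ≤ (12 / τ) ^ Fintype.card ι * exp (τ * L) := by
  set n := Fintype.card ι
  set T : β → ℝ := fun A => ∑ j, |(S A j : ℝ) - μ j|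
  -- `q j` is a sub-probability weight on `ℤ` concentrated around `μ j` at scale `1 / τ`
  set q : ι → ℤ → ℝ := fun j k => τ / 12 * exp (-(τ * |k - μ j|))
  have hq0 (j : ι) (k : ℤ) : 0 ≤ q j k := by positivity
  have hq1 (j : ι) (K : Finset ℤ) : ∑ k ∈ K, q j k ≤ 1 := by
    rw [← mul_sum]
    calc τ / 12 * ∑ k ∈ K, exp (-(τ * |k - μ j|)) ≤ τ / 12 * (12 / τ) := by
          gcongr; exact sum_exp_neg_mul_abs_sub_le K (μ j) hτ0 hτ1
      _ = 1 := by field_simp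
  have hweights : ∑ A ∈ 𝒜, ∏ j, q j (S A j) ≤ 1 := by
    rw [← sum_image (f := fun x : ι → ℤ => ∏ j, q j (x j)) hS]
    exact (sum_prod_le_prod_sum_image _ q hq0).trans
      (prod_le_one (fun j _ => sum_nonneg fun k _ => hq0 j k) fun j _ => hq1 j _)
  have hprod (A : β) : ∏ j, q j (S A j) = (τ / 12) ^ n * exp (-(τ * T A)) := by
    simp only [q, T, prod_mul_distrib, prod_const, card_univ, ← exp_sum, mul_sum,
      ← sum_neg_distrib, n]
  have hjensen : #𝒜 * exp (-(τ * L)) ≤ ∑ A ∈ 𝒜, exp (-(τ * T A)) := by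
    refine card_mul_exp_le_sum_exp _ _ ?_
    rw [sum_neg_distrib, ← mul_sum]
    nlinarith
  have hbound : #𝒜 * ((τ / 12) ^ n * exp (-(τ * L))) ≤ 1 :=
    calc #𝒜 * ((τ / 12) ^ n * exp (-(τ * L)))
        = (τ / 12) ^ n * (#𝒜 * exp (-(τ * L))) := by ring
      _ ≤ (τ / 12) ^ n * ∑ A ∈ 𝒜, exp (-(τ * T A)) := by gcongr
      _ = ∑ A ∈ 𝒜, ∏ j, q j (S A j) := by rw [mul_sum]; simp only [hprod]
      _ ≤ 1 := hweights
  rw [← le_div_iff₀ (by positivity)] at hbound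
  refine hbound.trans_eq ?_
  rw [exp_neg, div_pow, div_pow]
  field_simp

section powersetCard

variable {α : Type*} [Fintype α] [DecidableEq α]

lemma sum_powersetCard_sq_sum_eq (t : ℕ) (c : α → ℝ) :
    ∑ A ∈ powersetCard t univ, (∑ i ∈ A, c i) ^ 2
      = ∑ i, ∑ i', c i * c i' * #{A ∈ powersetCard t univ | i ∈ A ∧ i' ∈ A} := by
  have hA (A : Finset α) : (∑ i ∈ A, c i) ^ 2
      = ∑ i, ∑ i', c i * c i' * if i ∈ A ∧ i' ∈ A then 1 else 0 := by
    rw [← filter_univ_mem A, sum_filter, sq, sum_mul_sum]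
    refine sum_congr rfl fun i _ => sum_congr rfl fun i' _ => ?_
    split_ifs <;> simp_all
  simp only [hA, natCast_card_filter, mul_sum]
  rw [sum_comm]
  exact sum_congr rfl fun i _ => sum_comm

lemma card_powersetCard_filter_mem_mem {t : ℕ} (ht : 2 ≤ t) (i i' : α) :
    (#{A ∈ powersetCard t univ | i ∈ A ∧ i' ∈ A} : ℝ)
      = (Fintype.card α - 2).choose (t - 2)
        + if i = i' then
            ((Fintype.card α - 1).choose (t - 1) - (Fintype.card α - 2).choose (t - 2) : ℝ)
          else 0 := by
  have hcount := card_filter_powersetCard_subset {i, i'} univ t (subset_univ _)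
    (card_le_two.trans ht)
  simp only [insert_subset_iff, singleton_subset_iff, card_univ] at hcount
  split_ifs with h
  · subst h
    simp_all
  · simp_all [card_pair h]

lemma sum_powersetCard_sq_sum_le {t : ℕ} (ht : 2 ≤ t) (c : α → ℝ) (hc : ∑ i, c i = 0) :
    ∑ A ∈ powersetCard t univ, (∑ i ∈ A, c i) ^ 2
      ≤ (Fintype.card α - 1).choose (t - 1) * ∑ i, c i ^ 2 := by
  rw [sum_powersetCard_sq_sum_eq]
  simp only [card_powersetCard_filter_mem_mem ht, mul_add, sum_add_distrib, ← sum_mul, ← mul_sum,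
    hc, mul_ite, mul_zero, sum_ite_eq, mem_univ, if_true, zero_mul, zero_add, ← sq]
  have := sum_nonneg fun i (_ : i ∈ univ) => sq_nonneg (c i)
  have : (0 : ℝ) ≤ (Fintype.card α - 2).choose (t - 2) := by positivity
  nlinarith

lemma sum_abs_sum_sub_mean_le {t : ℕ} (ht : 2 ≤ t) (e : α → ℝ) (he : ∀ i, |e i| ≤ 1) :
    ∑ A ∈ powersetCard t univ, |∑ i ∈ A, e i - t * (∑ i, e i) / Fintype.card α|
      ≤ (Fintype.card α).choose t * (2 * √t) := by
  set d := Fintype.card α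
  rcases Nat.eq_zero_or_pos d with hd | hd
  · rw [powersetCard_eq_empty.2 (by simp only [card_univ, d] at hd ⊢; omega), sum_empty]
    positivity
  set m := (∑ i, e i) / d
  set c : α → ℝ := fun i => e i - m
  have hm : |m| ≤ 1 := by
    rw [abs_div, Nat.abs_cast, div_le_one (by positivity)]
    exact (abs_sum_le_sum_abs _ _).trans (by simpa using sum_le_sum fun i (_ : i ∈ univ) => he i)
  have hc0 : ∑ i, c i = 0 := by
    simp only [c, sum_sub_distrib, sum_const, card_univ, nsmul_eq_mul, m]
    field_simp
    ring
  have hcsq : ∑ i, c i ^ 2 ≤ 4 * d := by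
    have hc (i : α) : c i ^ 2 ≤ 4 := by
      have : |c i| ≤ 2 := (abs_sub _ _).trans (by linarith [he i])
      nlinarith [sq_abs (c i), abs_nonneg (c i)]
    simpa [mul_comm] using sum_le_sum fun i (_ : i ∈ univ) => hc i
  have hdev (A) (hA : A ∈ powersetCard t univ) :
      ∑ i ∈ A, e i - t * (∑ i, e i) / d = ∑ i ∈ A, c i := by
    rw [mem_powersetCard] at hA
    simp only [c, sum_sub_distrib, sum_const, hA.2, nsmul_eq_mul, m, mul_div_assoc]
  have hchoose : (d * (d - 1).choose (t - 1) : ℝ) = t * d.choose t := by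
    have := Nat.add_one_mul_choose_eq (d - 1) (t - 1)
    rw [Nat.sub_add_cancel hd, Nat.sub_add_cancel (by omega : 1 ≤ t)] at this
    exact_mod_cast this.trans (mul_comm _ _)
  have hvar : ∑ A ∈ powersetCard t univ, (∑ i ∈ A, c i) ^ 2 ≤ 4 * t * d.choose t :=
    calc _ ≤ (d - 1).choose (t - 1) * ∑ i, c i ^ 2 := sum_powersetCard_sq_sum_le ht c hc0
      _ ≤ (d - 1).choose (t - 1) * (4 * d) := by gcongr
      _ = 4 * t * d.choose t := by linear_combination 4 * hchoose
  rw [sum_congr rfl fun A hA => by rw [hdev A hA],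
    ← pow_le_pow_iff_left₀ (sum_nonneg fun _ _ => abs_nonneg _) (by positivity) two_ne_zero]
  calc (∑ A ∈ powersetCard t univ, |∑ i ∈ A, c i|) ^ 2
      ≤ d.choose t * ∑ A ∈ powersetCard t univ, |∑ i ∈ A, c i| ^ 2 := by
        simpa using sq_sum_le_card_mul_sum_sq (s := powersetCard t univ)
          (f := fun A => |∑ i ∈ A, c i|)
    _ ≤ d.choose t * (4 * t * d.choose t) := by simp only [sq_abs]; gcongr
    _ = (d.choose t * (2 * √t)) ^ 2 := by
      rw [mul_pow, mul_pow, sq_sqrt (by positivity)]; ring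

theorem choose_le_of_injOn_sum_powersetCard {ι : Type*} [Fintype ι] [DecidableEq ι] {t : ℕ}
    (ht : 2 ≤ t) (ε : Matrix ι α ℤ) (hε : ∀ j i, |ε j i| ≤ 1)
    (hinj : Set.InjOn (fun A j => ∑ i ∈ A, ε j i) (powersetCard t (univ : Finset α))) :
    ((Fintype.card α).choose t : ℝ) ≤ (12 * exp 2 * √t) ^ Fintype.card ι := by
  have hsqrt : 1 ≤ √(t : ℝ) := one_le_sqrt.2 (by exact_mod_cast (by omega : 1 ≤ t))
  have hL : ∑ A ∈ powersetCard t univ, ∑ j, |((∑ i ∈ A, ε j i : ℤ) : ℝ)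
        - t * (∑ i, (ε j i : ℝ)) / Fintype.card α|
      ≤ #(powersetCard t (univ : Finset α)) * (Fintype.card ι * (2 * √t)) := by
    rw [sum_comm, card_powersetCard, card_univ]
    calc _ ≤ ∑ j : ι, ((Fintype.card α).choose t : ℝ) * (2 * √t) := by
          refine sum_le_sum fun j _ => ?_
          push_cast
          exact sum_abs_sum_sub_mean_le ht _ fun i => by exact_mod_cast hε j i
      _ = _ := by simp only [sum_const, card_univ, nsmul_eq_mul]; ring
  have key := card_le_of_injOn_of_sum_abs_sub_le hinj _ (by positivity)
    ((inv_le_one₀ (by positivity)).2 hsqrt) hL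
  rw [card_powersetCard, card_univ] at key
  refine key.trans_eq ?_
  have : (√t)⁻¹ * (Fintype.card ι * (2 * √t)) = Fintype.card ι * 2 := by field_simp
  rw [this, exp_nat_mul, div_inv_eq_mul]
  ring

end powersetCard

theorem Robust.injOn_sum_powersetCard {F : Type*} [Field F] {n d s t : ℕ}
    {M : Matrix (Fin n) (Fin d) F} (hM : Robust M s) (ht : 2 * t ≤ s) :
    Set.InjOn (fun A j => ∑ i ∈ A, M j i) (powersetCard t (univ : Finset (Fin d))) := by
  intro A hA B hB hAB
  simp only [mem_coe, mem_powersetCard] at hA hB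
  by_contra hne
  set a : Fin d → F := fun i => (if i ∈ A then 1 else 0) - if i ∈ B then 1 else 0
  refine hM a ?_ ?_ ?_
  · obtain ⟨i, hi⟩ := not_forall.1 (mt Finset.ext hne)
    intro h
    have hai := congrFun h i
    by_cases hiA : i ∈ A <;> by_cases hiB : i ∈ B <;> simp [a, hiA, hiB] at hai hi
  · calc #{i | a i ≠ 0} ≤ #(A ∪ B) := card_le_card fun i => by
          by_cases hiA : i ∈ A <;> by_cases hiB : i ∈ B <;> simp [a, hiA, hiB]
      _ ≤ #A + #B := card_union_le A B
      _ ≤ s := by omega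
  · ext j
    have := congrFun hAB j
    simp_all [a, Matrix.mulVec, dotProduct, mul_sub, sum_sub_distrib]

lemma div_pow_le_choose {d t : ℕ} (h : 2 * t ≤ d) : ((d : ℝ) / (2 * t)) ^ t ≤ d.choose t := by
  have hd : (d : ℝ) / 2 ≤ (d + 1 - t : ℕ) := by
    have h' : (2 * t : ℝ) ≤ d := by exact_mod_cast h
    rw [Nat.cast_sub (by omega)]
    push_cast
    linarith
  calc ((d : ℝ) / (2 * t)) ^ t = ((d : ℝ) / 2) ^ t / (t : ℝ) ^ t := by rw [← div_pow, div_div]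
    _ ≤ ((d + 1 - t : ℕ) : ℝ) ^ t / (t : ℝ) ^ t := by gcongr
    _ ≤ ((d + 1 - t : ℕ) : ℝ) ^ t / t.factorial :=
      div_le_div_of_nonneg_left (by positivity) (by exact_mod_cast t.factorial_pos)
        (by exact_mod_cast t.factorial_le_pow)
    _ ≤ d.choose t := Nat.pow_le_choose t d

lemma eventually_add_log_le_mul {β : ℝ} (hβ : 0 < β) (c : ℝ) :
    ∀ᶠ x : ℝ in atTop, c + log x ≤ β * x := by
  have hlog := isLittleO_log_id_atTop.bound (half_pos hβ)
  have hc := (tendsto_id.const_mul_atTop (half_pos hβ)).eventually_ge_atTop c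
  filter_upwards [hlog, hc, eventually_ge_atTop 0] with x hlog hc hx
  simp only [norm_eq_abs, id, abs_of_nonneg hx] at hc hlog
  linarith [le_abs_self (log x)]

lemma log_twelve_lt_three : log 12 < 3 := by
  rw [log_lt_iff_lt_exp (by norm_num), show (3 : ℝ) = 1 + 1 + 1 by norm_num, exp_add, exp_add]
  have := exp_one_gt_d9
  nlinarith

lemma pow_lt_pow_of_add_log_le {β : ℝ} {n t : ℕ} (hn : 1 ≤ n) (hlog : 12 + log n ≤ β * n)
    (ht : β * n / 2 - 1 ≤ t) (htn : t ≤ n) :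
    (12 * exp 2 * √t) ^ n < (exp (12 / β) * (n : ℝ) ^ (1 / β)) ^ t := by
  have hn0 : (1 : ℝ) ≤ n := by exact_mod_cast hn
  have hlogn : 0 ≤ log n := log_nonneg hn0
  have hβ : 0 < β := by nlinarith
  have ht0 : (0 : ℝ) < t := by nlinarith
  have hlogt : log t ≤ log n := log_le_log ht0 (by exact_mod_cast htn)
  rw [← log_lt_log_iff (by positivity) (by positivity), log_pow, log_pow,
    log_mul (by positivity) (by positivity), log_mul (by positivity) (by positivity), log_exp,
    log_sqrt ht0.le, log_mul (by positivity) (by positivity), log_exp, log_rpow (by positivity)]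
  have hdiv : (12 + log n) / β ≤ n := by rw [div_le_iff₀ hβ]; linarith
  calc (n : ℝ) * (log 12 + 2 + log t / 2) < n * (5 + log n / 2) :=
        mul_lt_mul_of_pos_left (by linarith [log_twelve_lt_three]) (by positivity)
    _ = (β * n / 2) * ((12 + log n) / β) - n := by field_simp; ring
    _ ≤ (β * n / 2) * ((12 + log n) / β) - (12 + log n) / β := by gcongr
    _ = (β * n / 2 - 1) * ((12 + log n) / β) := by ring
    _ ≤ t * (12 / β + 1 / β * log n) := by
      rw [show 12 / β + 1 / β * log n = (12 + log n) / β by ring]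
      gcongr

lemma pow_lt_choose_of_add_log_le {β : ℝ} {n t d : ℕ} (hn : 1 ≤ n)
    (hlog : 12 + log n ≤ β * n) (ht : β * n / 2 - 1 ≤ t) (h2t : 2 * t ≤ n)
    (hd : exp (12 / β) * (n : ℝ) ^ (1 + 1 / β) ≤ d) :
    (12 * exp 2 * √t) ^ n < d.choose t := by
  have hn0 : (1 : ℝ) ≤ n := by exact_mod_cast hn
  have hβ : 0 < β := by nlinarith [log_nonneg hn0]
  have ht0 : (0 : ℝ) < t := by nlinarith [log_nonneg hn0]
  have hD : exp (12 / β) * (n : ℝ) ^ (1 / β) ≤ d / (2 * t) :=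
    calc exp (12 / β) * (n : ℝ) ^ (1 / β) = exp (12 / β) * (n : ℝ) ^ (1 + 1 / β) / n := by
          rw [rpow_add (by positivity), rpow_one]; field_simp
      _ ≤ d / n := by gcongr
      _ ≤ d / (2 * t) := by gcongr; exact_mod_cast h2t
  have hD1 : 1 ≤ exp (12 / β) * (n : ℝ) ^ (1 / β) :=
    one_le_mul_of_one_le_of_one_le (one_le_exp (by positivity)) (one_le_rpow hn0 (by positivity))
  have h2td : 2 * t ≤ d := by
    have := hD1.trans hD
    rw [one_le_div (by positivity)] at this
    exact_mod_cast this
  calc (12 * exp 2 * √t) ^ n < (exp (12 / β) * (n : ℝ) ^ (1 / β)) ^ t :=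
        pow_lt_pow_of_add_log_le hn hlog ht (by omega)
    _ ≤ ((d : ℝ) / (2 * t)) ^ t := by gcongr
    _ ≤ d.choose t := div_pow_le_choose h2td

/-- For any fixed `0 < δ < 1` there is `C > 0` such that for all sufficiently large `n`,
if `s = ⌊(1 − δ)n⌋` and `d ≥ C n^{1 + 1/(1−δ)}`, then no `n × d` `±1` matrix is
`s`-robust over `ℝ`. -/
theorem no_robust_pm_one_matrix_for_large_d (δ : ℝ) (hδ0 : 0 < δ) (hδ1 : δ < 1) :
    ∃ C : ℝ, 0 < C ∧ ∃ n₀ : ℕ, ∀ n : ℕ, n₀ ≤ n → ∀ d : ℕ,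
      C * (n : ℝ) ^ ((1 : ℝ) + 1 / (1 - δ)) ≤ (d : ℝ) →
      ∀ M : Matrix (Fin n) (Fin d) ℝ, (∀ i j, M i j = 1 ∨ M i j = -1) →
        ¬ Robust M ⌊(1 - δ) * n⌋₊ := by
  obtain ⟨n₀, hn₀⟩ := eventually_atTop.1 <| (eventually_ge_atTop 1).and <|
    tendsto_natCast_atTop_atTop.eventually (eventually_add_log_le_mul (sub_pos.2 hδ1) 12)
  refine ⟨exp (12 / (1 - δ)), exp_pos _, n₀, fun n hn d hd M hM hrob => ?_⟩
  obtain ⟨hn1, hlog⟩ := hn₀ n hn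
  set s := ⌊(1 - δ) * n⌋₊
  have hs : (1 - δ) * n - 1 < s := Nat.sub_one_lt_floor _
  have hsn : s ≤ n := Nat.floor_le_of_le (by nlinarith)
  have hs2 : (s : ℝ) ≤ 2 * (s / 2 : ℕ) + 1 := by exact_mod_cast (by omega : s ≤ 2 * (s / 2) + 1)
  have ht : 2 ≤ s / 2 := by
    have : (3 : ℝ) < s := by linarith [log_nonneg (by exact_mod_cast hn1 : (1 : ℝ) ≤ n)]
    have : 3 < s := by exact_mod_cast this
    omega
  obtain ⟨ε, hε, rfl⟩ : ∃ ε : Matrix (Fin n) (Fin d) ℤ, (∀ j i, |ε j i| ≤ 1) ∧ ε.map (↑) = M :=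
    ⟨.of fun j i => if M j i = 1 then 1 else -1, fun j i => by rw [Matrix.of_apply]; split_ifs <;> simp,
      by ext j i; rcases hM j i with h | h <;> norm_num [h]⟩
  have hinj : Set.InjOn (fun A j => ∑ i ∈ A, ε j i)
      (powersetCard (s / 2) (univ : Finset (Fin d))) := by
    intro A hA B hB h
    refine hrob.injOn_sum_powersetCard (Nat.mul_div_le s 2) hA hB ?_
    ext j
    simpa using congr(((↑) : ℤ → ℝ) ($h j))
  have hchoose := choose_le_of_injOn_sum_powersetCard ht ε hε hinj
  rw [Fintype.card_fin, Fintype.card_fin] at hchoose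
  exact (pow_lt_choose_of_add_log_le hn1 hlog (by linarith) (by omega) hd).not_ge hchoose
end

section
/- There is an absolute constant C > 0 such that for every ε ∈ (0,1), every even integer n ≥ 2, and every integer m with 0 ≤ m ≤ (1−ε)n, one has |α(n,m) − 1| ≤ C·m/(εn). -/
open scoped Classical

/-- Number of pairs `(ξ, ξ')` of Boolean vectors such that `ξ₁+⋯+ξ_n = 0` and
`ξ₁+⋯+ξ_m+ξ'_{m+1}+⋯+ξ'_n = 0`, where `true ↦ +1` and `false ↦ −1`. -/
def countBoth (n m : ℕ) : ℕ :=
  (Finset.univ.filter fun ξ : (Fin n → Bool) × (Fin n → Bool) =>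
    (∑ i : Fin n, (if ξ.1 i then (1 : ℤ) else -1)) = 0 ∧
    (∑ i : Fin n, (if (i : ℕ) < m then (if ξ.1 i then (1 : ℤ) else -1)
           else (if ξ.2 i then (1 : ℤ) else -1))) = 0).card

/-- Number of Boolean vectors `ξ` with `ξ₁+⋯+ξ_n = 0`, where `true ↦ +1`, `false ↦ −1`. -/
def countZero (n : ℕ) : ℕ :=
  (Finset.univ.filter fun ξ : Fin n → Bool =>
    (∑ i : Fin n, (if ξ i then (1 : ℤ) else -1)) = 0).card

/-- `α(n,m) = P[ξ₁+⋯+ξ_n = 0 ∧ ξ₁+⋯+ξ_m+ξ'_{m+1}+⋯+ξ'_n = 0] / P[ξ₁+⋯+ξ_n = 0]²`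
for i.i.d. Rademacher random variables `ξᵢ, ξ'ᵢ`. -/
noncomputable def alphaCorr (n m : ℕ) : ℝ :=
  ((countBoth n m : ℝ) / 2 ^ (2 * n)) / ((countZero n : ℝ) / 2 ^ n) ^ 2

/-! Write `n = m + k` and split a `±1` vector into its first `m` and last `k` coordinates. If
`a x` counts the completions of a prefix `x` to a vector of sum zero, then `C(n, n/2) = ∑ₓ a x`,
while the pairs counted by `α` number `2 ^ m ∑ₓ (a x)²`, the prefix of `ξ'` being free.
Cauchy–Schwarz over the `2 ^ m` prefixes gives `α ≥ 1`, and `a x ≤ C(k, k/2)` gives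
`α ≤ r := 2 ^ m C(k, k/2) / C(n, n/2)`. Finally `K ↦ K (C(K, K/2) / 2 ^ K)²` increases along
even `K` and is dominated at odd `K` by its value at `K + 1`, so `k r² ≤ n`; hence
`k (α - 1) ≤ k (r² - 1) ≤ m`, and `k ≥ εn`. -/

open Finset

section Spins

variable {ι : Type*} [Fintype ι]

def spinSum (ξ : ι → Bool) : ℤ := ∑ i, if ξ i then 1 else -1

lemma spinSum_eq_two_mul_card_sub (ξ : ι → Bool) :
    spinSum ξ = 2 * #{i | ξ i} - Fintype.card ι := by
  rw [spinSum, natCast_card_filter, Finset.mul_sum, ← Finset.card_univ, ← nsmul_one,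
    ← Finset.sum_const, ← Finset.sum_sub_distrib]
  refine Finset.sum_congr rfl fun i _ => ?_
  cases ξ i <;> simp

variable [DecidableEq ι]

lemma card_filter_card_true_eq_choose (r : ℕ) :
    #{ξ : ι → Bool | #{i | ξ i} = r} = (Fintype.card ι).choose r := by
  rw [← Finset.card_univ, ← Finset.card_powersetCard]
  exact Finset.card_nbij' (fun ξ => ({i | ξ i} : Finset ι)) (fun s i => decide (i ∈ s))
    (fun ξ hξ => by simpa using hξ) (fun s hs => by simp_all)
    (fun ξ _ => by ext; simp) (fun s _ => by ext; simp)

variable (ι) in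
def spinCount (t : ℤ) : ℕ := #{ξ : ι → Bool | spinSum ξ = t}

lemma spinCount_eq_sum_ite (t : ℤ) :
    spinCount ι t = ∑ ξ : ι → Bool, if spinSum ξ = t then 1 else 0 := by
  rw [spinCount, Finset.card_filter]

lemma spinCount_le_choose_half (t : ℤ) :
    spinCount ι t ≤ (Fintype.card ι).choose (Fintype.card ι / 2) := by
  calc spinCount ι t
      ≤ #{ξ : ι → Bool | #{i | ξ i} = ((t + Fintype.card ι) / 2).toNat} := by
        refine Finset.card_le_card fun ξ => ?_
        simp only [mem_filter, mem_univ, true_and, spinSum_eq_two_mul_card_sub]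
        omega
    _ ≤ _ := by
        rw [card_filter_card_true_eq_choose]
        exact Nat.choose_le_middle _ _

lemma spinCount_zero (h : Even (Fintype.card ι)) :
    spinCount ι 0 = (Fintype.card ι).choose (Fintype.card ι / 2) := by
  rw [← card_filter_card_true_eq_choose, spinCount]
  congr 1
  refine Finset.filter_congr fun ξ _ => ?_
  rw [spinSum_eq_two_mul_card_sub]
  obtain ⟨j, hj⟩ := h
  omega

end Spins

lemma spinSum_appendEquiv {m k : ℕ} (p : (Fin m → Bool) × (Fin k → Bool)) :
    spinSum (Fin.appendEquiv m k p) = spinSum p.1 + spinSum p.2 := by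
  simp [spinSum, Fin.sum_univ_add]

lemma countZero_eq_spinCount (n : ℕ) : countZero n = spinCount (Fin n) 0 := rfl

lemma countZero_add_eq_sum (m k : ℕ) :
    countZero (m + k) = ∑ x : Fin m → Bool, spinCount (Fin k) (-spinSum x) := by
  rw [countZero_eq_spinCount, spinCount_eq_sum_ite, ← (Fin.appendEquiv m k).sum_comp,
    Fintype.sum_prod_type]
  refine Finset.sum_congr rfl fun x _ => ?_
  rw [spinCount_eq_sum_ite]
  refine Finset.sum_congr rfl fun y _ => ?_
  simp only [spinSum_appendEquiv, eq_neg_iff_add_eq_zero, add_comm (spinSum x)]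

lemma countBoth_add_eq_sum (m k : ℕ) :
    countBoth (m + k) m = 2 ^ m * ∑ x : Fin m → Bool, spinCount (Fin k) (-spinSum x) ^ 2 := by
  have hfirst (p : (Fin m → Bool) × (Fin k → Bool)) :
      (∑ i, if Fin.appendEquiv m k p i then (1 : ℤ) else -1) = spinSum p.1 + spinSum p.2 :=
    spinSum_appendEquiv p
  have hmixed (p q : (Fin m → Bool) × (Fin k → Bool)) :
      (∑ i : Fin (m + k), if (i : ℕ) < m
        then (if Fin.appendEquiv m k p i then (1 : ℤ) else -1)
        else (if Fin.appendEquiv m k q i then (1 : ℤ) else -1)) = spinSum p.1 + spinSum q.2 := by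
    simp [spinSum, Fin.sum_univ_add]
  rw [countBoth, Finset.card_filter,
    ← ((Fin.appendEquiv m k).prodCongr (Fin.appendEquiv m k)).sum_comp]
  simp only [Equiv.prodCongr_apply, Prod.map, hfirst, hmixed, Fintype.sum_prod_type,
    Finset.mul_sum]
  refine Finset.sum_congr rfl fun x _ => ?_
  rw [spinCount_eq_sum_ite, sq, Finset.sum_mul_sum, Finset.mul_sum]
  refine Finset.sum_congr rfl fun y _ => ?_
  simp only [Finset.sum_const, Finset.card_univ, Fintype.card_fun, Fintype.card_bool,
    Fintype.card_fin, smul_eq_mul, ite_zero_mul_ite_zero, mul_one, eq_neg_iff_add_eq_zero,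
    add_comm (spinSum x)]

namespace Nat

lemma sixteen_mul_centralBinom_sq_le (j : ℕ) :
    16 * (j * centralBinom j ^ 2) ≤ (j + 1) * centralBinom (j + 1) ^ 2 := by
  have hrec := succ_mul_centralBinom_succ j
  have hj : 4 * j * (j + 1) ≤ (2 * j + 1) ^ 2 := by nlinarith
  refine Nat.le_of_mul_le_mul_right ?_ (pow_pos (succ_pos j) 2)
  calc 16 * (j * centralBinom j ^ 2) * (j + 1) ^ 2
      = 4 * (j + 1) * centralBinom j ^ 2 * (4 * j * (j + 1)) := by ring
    _ ≤ 4 * (j + 1) * centralBinom j ^ 2 * (2 * j + 1) ^ 2 := by gcongr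
    _ = (j + 1) * ((j + 1) * centralBinom (j + 1)) ^ 2 := by rw [hrec]; ring
    _ = (j + 1) * centralBinom (j + 1) ^ 2 * (j + 1) ^ 2 := by ring

lemma mul_centralBinom_sq_mul_sixteen_pow_le (i d : ℕ) :
    i * centralBinom i ^ 2 * 16 ^ d ≤ (i + d) * centralBinom (i + d) ^ 2 := by
  induction d with
  | zero => simp
  | succ d ih =>
    calc i * centralBinom i ^ 2 * 16 ^ (d + 1) = 16 * (i * centralBinom i ^ 2 * 16 ^ d) := by
          ring
      _ ≤ 16 * ((i + d) * centralBinom (i + d) ^ 2) := by gcongr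
      _ ≤ (i + (d + 1)) * centralBinom (i + (d + 1)) ^ 2 :=
          sixteen_mul_centralBinom_sq_le (i + d)

lemma choose_two_mul_add_one_half (i : ℕ) :
    (2 * i + 1).choose ((2 * i + 1) / 2) * 2 = centralBinom (i + 1) := by
  rw [centralBinom, show 2 * (i + 1) = 2 * i + 1 + 1 by ring, choose_succ_succ,
    choose_symm_half, show (2 * i + 1) / 2 = i by omega]
  ring

lemma mul_sq_two_pow_mul_choose_half_le {m k : ℕ} (h : Even (m + k)) :
    k * (2 ^ m * k.choose (k / 2)) ^ 2 ≤ (m + k) * (m + k).choose ((m + k) / 2) ^ 2 := by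
  rcases Nat.even_or_odd k with ⟨i, rfl⟩ | ⟨i, rfl⟩
  · obtain ⟨d, rfl⟩ : Even m := (Nat.even_add.1 h).2 ⟨i, rfl⟩
    have hi : (i + i).choose ((i + i) / 2) = centralBinom i := by
      rw [centralBinom, two_mul, show (i + i) / 2 = i by omega]
    have hid : (d + d + (i + i)).choose ((d + d + (i + i)) / 2) = centralBinom (i + d) := by
      rw [centralBinom, show d + d + (i + i) = 2 * (i + d) by ring,
        Nat.mul_div_cancel_left _ two_pos]
    calc (i + i) * (2 ^ (d + d) * (i + i).choose ((i + i) / 2)) ^ 2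
        = 2 * (i * centralBinom i ^ 2 * 16 ^ d) := by
          rw [hi, show (16 : ℕ) = 2 ^ 4 by norm_num, ← pow_mul]; ring
      _ ≤ 2 * ((i + d) * centralBinom (i + d) ^ 2) :=
          Nat.mul_le_mul_left 2 (mul_centralBinom_sq_mul_sixteen_pow_le i d)
      _ = _ := by rw [hid]; ring
  · obtain ⟨d, rfl⟩ : Odd m := by simpa [Nat.even_add, parity_simps] using h
    have hid : (2 * d + 1 + (2 * i + 1)).choose ((2 * d + 1 + (2 * i + 1)) / 2)
        = centralBinom (i + 1 + d) := by
      rw [centralBinom, show 2 * d + 1 + (2 * i + 1) = 2 * (i + 1 + d) by ring,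
        Nat.mul_div_cancel_left _ two_pos]
    calc (2 * i + 1) * (2 ^ (2 * d + 1) * (2 * i + 1).choose ((2 * i + 1) / 2)) ^ 2
        = (2 * i + 1) * (centralBinom (i + 1) ^ 2 * 16 ^ d) := by
          rw [← choose_two_mul_add_one_half, show (16 : ℕ) = 2 ^ 4 by norm_num, ← pow_mul]
          ring
      _ ≤ 2 * (i + 1) * (centralBinom (i + 1) ^ 2 * 16 ^ d) := Nat.mul_le_mul_right _ (by omega)
      _ = 2 * ((i + 1) * centralBinom (i + 1) ^ 2 * 16 ^ d) := by ring
      _ ≤ 2 * ((i + 1 + d) * centralBinom (i + 1 + d) ^ 2) :=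
          Nat.mul_le_mul_left 2 (mul_centralBinom_sq_mul_sixteen_pow_le (i + 1) d)
      _ = _ := by rw [hid]; ring

end Nat

lemma countZero_sq_le_countBoth (m k : ℕ) : countZero (m + k) ^ 2 ≤ countBoth (m + k) m := by
  rw [countZero_add_eq_sum, countBoth_add_eq_sum]
  calc _ ≤ #(univ : Finset (Fin m → Bool)) *
          ∑ x : Fin m → Bool, spinCount (Fin k) (-spinSum x) ^ 2 := sq_sum_le_card_mul_sum_sq
    _ = _ := by simp

lemma countBoth_le_countZero_mul (m k : ℕ) :
    countBoth (m + k) m ≤ countZero (m + k) * (2 ^ m * k.choose (k / 2)) := by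
  rw [countZero_add_eq_sum, countBoth_add_eq_sum, Finset.mul_sum, Finset.sum_mul]
  refine Finset.sum_le_sum fun x _ => ?_
  have := spinCount_le_choose_half (ι := Fin k) (-spinSum x)
  rw [Fintype.card_fin] at this
  calc 2 ^ m * spinCount (Fin k) (-spinSum x) ^ 2
      = spinCount (Fin k) (-spinSum x) * (2 ^ m * spinCount (Fin k) (-spinSum x)) := by ring
    _ ≤ _ := by gcongr

lemma countZero_of_even {n : ℕ} (hn : Even n) : countZero n = n.choose (n / 2) := by
  simpa [countZero_eq_spinCount] using spinCount_zero (ι := Fin n) (by simpa using hn)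

lemma alphaCorr_eq (n m : ℕ) : alphaCorr n m = countBoth n m / (countZero n : ℝ) ^ 2 := by
  rw [alphaCorr, mul_comm 2 n, pow_mul]
  field_simp

lemma one_le_alphaCorr_and_mul_sub_one_le {m k : ℕ} (h : Even (m + k)) :
    1 ≤ alphaCorr (m + k) m ∧ k * (alphaCorr (m + k) m - 1) ≤ m := by
  have hZ : 0 < (countZero (m + k) : ℝ) := by
    rw [countZero_of_even h]
    exact_mod_cast Nat.choose_pos (Nat.div_le_self _ 2)
  have hZB : (countZero (m + k) : ℝ) ^ 2 ≤ countBoth (m + k) m := by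
    exact_mod_cast countZero_sq_le_countBoth m k
  have hBM : (countBoth (m + k) m : ℝ) ≤
      countZero (m + k) * ((2 ^ m * k.choose (k / 2) : ℕ) : ℝ) := by
    exact_mod_cast countBoth_le_countZero_mul m k
  have hMZ : (k : ℝ) * ((2 ^ m * k.choose (k / 2) : ℕ) : ℝ) ^ 2 ≤
      (m + k) * (countZero (m + k) : ℝ) ^ 2 := by
    rw [countZero_of_even h]
    exact_mod_cast Nat.mul_sq_two_pow_mul_choose_half_le h
  set Z : ℝ := (countZero (m + k) : ℝ)
  set B : ℝ := (countBoth (m + k) m : ℝ)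
  set M : ℝ := ((2 ^ m * k.choose (k / 2) : ℕ) : ℝ)
  have hZM : Z ≤ M := le_of_mul_le_mul_left (by nlinarith) hZ
  rw [alphaCorr_eq, one_le_div (by positivity), div_sub_one (by positivity), mul_div_assoc',
    div_le_iff₀ (by positivity)]
  refine ⟨hZB, ?_⟩
  calc k * (B - Z ^ 2) ≤ k * (Z * M - Z ^ 2) := by gcongr
    _ ≤ k * (M ^ 2 - Z ^ 2) := by gcongr; nlinarith
    _ ≤ m * Z ^ 2 := by linarith

/-- There is `C > 0` such that for every `ε ∈ (0,1)`, even `n ≥ 2`, and `0 ≤ m ≤ (1−ε)n`,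
`|α(n,m) − 1| ≤ C m/(εn)`. -/
theorem alpha_close_to_one_linear :
    ∃ C : ℝ, 0 < C ∧
      ∀ ε : ℝ, 0 < ε → ε < 1 → ∀ n : ℕ, Even n → 2 ≤ n →
      ∀ m : ℕ, (m : ℝ) ≤ (1 - ε) * n →
        |alphaCorr n m - 1| ≤ C * m / (ε * n) := by
  refine ⟨1, one_pos, fun ε hε _ n hn hn2 m hm => ?_⟩
  have hεn : 0 < ε * n := mul_pos hε (by exact_mod_cast (by omega : 0 < n))
  obtain ⟨k, rfl⟩ : ∃ k, n = m + k := Nat.exists_eq_add_of_le <| by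
    exact_mod_cast hm.trans (by nlinarith : (1 - ε) * n ≤ n)
  obtain ⟨hα, hαk⟩ := one_le_alphaCorr_and_mul_sub_one_le hn
  push_cast at hm hεn ⊢
  rw [abs_of_nonneg (sub_nonneg.2 hα), one_mul, le_div_iff₀ hεn]
  nlinarith
end

section
/- There is an absolute constant C > 0 such that for every even integer n ≥ 2 and every integer m with 0 ≤ m ≤ n^{1/2}, one has |α(n,m) − 1| ≤ C·m²/n². -/
open scoped Classical

/-!
Write `n = 2c` and split a vector `ξ ∈ {±1}ⁿ` into its first `m` signs `a` and the remaining
`n - m`. If `a` has `k` plus signs, it extends to a zero-sum vector in `C(2c - m, c - k)` ways,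
so `t(a) = 2^m C(2c - m, c - k) / C(2c, c)` is the likelihood ratio of `ξ₁+⋯+ξ_n = 0` given `a`.
It has mean one over uniform `a`, and `α(n, m)` is its second moment, so `α - 1 = E (t - 1)²`.
Comparing the factors of `C(2c - m, c - k) / C(2c, c)` one by one gives
`|t - 1| ≤ (m + S²) / c` with `S = m - 2k` the partial sum of the signs, and the moments
`E S² = m`, `E S⁴ = 3m² - 2m` turn this into `α - 1 ≤ 6 m² / c² = 24 m² / n²`.
-/

open Finset

section BoolVectors

variable {ι : Type*} [Fintype ι]

def ones (v : ι → Bool) : ℕ := #{i | v i = true}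

lemma spin_sum_eq (v : ι → Bool) :
    ∑ i, (if v i then (1 : ℤ) else -1) = 2 * ones v - Fintype.card ι := by
  have h : ∀ i, (if v i then (1 : ℤ) else -1) = 2 * (if v i = true then 1 else 0) - 1 := by
    intro i; cases v i <;> simp
  simp only [h, sum_sub_distrib, ← mul_sum, sum_boole, sum_const, card_univ, ones]
  simp

lemma ones_le_card (v : ι → Bool) : ones v ≤ Fintype.card ι := card_filter_le _ _

variable [DecidableEq ι]

lemma sum_comp_ones {M : Type*} [AddCommMonoid M] (f : ℕ → M) :
    ∑ v : ι → Bool, f (ones v) =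
      ∑ k ∈ range (Fintype.card ι + 1), (Fintype.card ι).choose k • f k := by
  rw [← card_univ, ← sum_powerset_apply_card, powerset_univ]
  exact sum_nbij' (fun v => ({i | v i = true} : Finset ι)) (fun s i => decide (i ∈ s))
    (by simp) (by simp) (by intro v _; funext i; simp) (by intro s _; ext i; simp)
    (by intro v _; rfl)

lemma card_ones_eq (j : ℕ) :
    #{v : ι → Bool | ones v = j} = (Fintype.card ι).choose j := by
  rw [card_filter, sum_comp_ones (fun k => if k = j then 1 else 0)]
  rcases lt_or_ge (Fintype.card ι) j with h | h
  · rw [Nat.choose_eq_zero_of_lt h]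
    exact sum_eq_zero fun k hk => by
      simp only [mem_range] at hk; simp [show k ≠ j by omega]
  · simp [h]

end BoolVectors

lemma ones_append {m r : ℕ} (a : Fin m → Bool) (b : Fin r → Bool) :
    ones (Fin.append a b) = ones a + ones b := by
  simp only [ones, card_filter, Fin.sum_univ_add, Fin.append_left, Fin.append_right]

lemma sum_fun_fin_add {α M : Type*} [Fintype α] [AddCommMonoid M] {m r : ℕ}
    (F : (Fin (m + r) → α) → M) :
    ∑ v, F v = ∑ a : Fin m → α, ∑ b : Fin r → α, F (Fin.append a b) := by
  rw [← Fintype.sum_prod_type']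
  exact (Fintype.sum_equiv (Fin.appendEquiv m r) _ _ fun _ => rfl).symm

lemma sum_fin_succ_comp_ones {M : Type*} [AddCommMonoid M] {m : ℕ} (F : ℕ → M) :
    ∑ v : Fin (m + 1) → Bool, F (ones v) = ∑ a : Fin m → Bool, (F (ones a) + F (ones a + 1)) := by
  rw [sum_fun_fin_add]
  refine sum_congr rfl fun a _ => ?_
  simp only [ones_append]
  rw [sum_comp_ones (fun j => F (ones a + j))]
  simp [sum_range_succ]

section Moments

variable {R : Type*} [CommRing R]

lemma sum_const_boolFun (m : ℕ) (x : R) : ∑ _a : Fin m → Bool, x = 2 ^ m * x := by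
  simp [sum_const, card_univ]

lemma sum_sub_two_mul_ones_sq (m : ℕ) :
    ∑ a : Fin m → Bool, ((m : R) - 2 * ones a) ^ 2 = (m : R) * 2 ^ m := by
  induction m with
  | zero => simp [ones]
  | succ m ih =>
    rw [sum_fin_succ_comp_ones (fun k => ((↑(m + 1) : R) - 2 * k) ^ 2)]
    have h : ∀ a : Fin m → Bool, ((↑(m + 1) : R) - 2 * ↑(ones a)) ^ 2 +
        ((↑(m + 1) : R) - 2 * ↑(ones a + 1)) ^ 2 = 2 * ((m : R) - 2 * ones a) ^ 2 + 2 := by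
      intro a; push_cast; ring
    simp only [h, sum_add_distrib, ← mul_sum, ih, sum_const_boolFun]
    push_cast; ring

lemma sum_sub_two_mul_ones_pow_four (m : ℕ) :
    ∑ a : Fin m → Bool, ((m : R) - 2 * ones a) ^ 4 = (3 * (m : R) ^ 2 - 2 * m) * 2 ^ m := by
  induction m with
  | zero => simp [ones]
  | succ m ih =>
    rw [sum_fin_succ_comp_ones (fun k => ((↑(m + 1) : R) - 2 * k) ^ 4)]
    have h : ∀ a : Fin m → Bool, ((↑(m + 1) : R) - 2 * ↑(ones a)) ^ 4 +
        ((↑(m + 1) : R) - 2 * ↑(ones a + 1)) ^ 4 =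
          2 * ((m : R) - 2 * ones a) ^ 4 + 12 * ((m : R) - 2 * ones a) ^ 2 + 2 := by
      intro a; push_cast; ring
    simp only [h, sum_add_distrib, ← mul_sum, ih, sum_sub_two_mul_ones_sq, sum_const_boolFun]
    push_cast; ring

end Moments

lemma spin_sum_eq_zero_iff {n c : ℕ} (hn : n = 2 * c) (v : Fin n → Bool) :
    ∑ i, (if v i then (1 : ℤ) else -1) = 0 ↔ ones v = c := by
  rw [spin_sum_eq, Fintype.card_fin]; omega

lemma countZero_two_mul (c : ℕ) : countZero (2 * c) = (2 * c).choose c := by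
  simp only [countZero, spin_sum_eq_zero_iff rfl, card_ones_eq, Fintype.card_fin]

lemma card_ones_add_eq {m r c : ℕ} (a : Fin m → Bool) (hac : ones a ≤ c) :
    #{b : Fin r → Bool | ones a + ones b = c} = r.choose (c - ones a) := by
  have key : ∀ b : Fin r → Bool, ones a + ones b = c ↔ ones b = c - ones a := fun b => by
    constructor <;> intro <;> omega
  simp only [key]
  rw [card_ones_eq, Fintype.card_fin]

lemma countZero_add {m r c : ℕ} (hmc : m ≤ c) (h : m + r = 2 * c) :
    countZero (m + r) = ∑ a : Fin m → Bool, r.choose (c - ones a) := by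
  rw [countZero, card_filter, sum_fun_fin_add]
  refine sum_congr rfl fun a _ => ?_
  simp only [spin_sum_eq_zero_iff h, ones_append]
  rw [← card_filter, card_ones_add_eq a ((ones_le_card a).trans (by simpa using hmc))]

lemma mixed_spin_sum_append {m r : ℕ} (a a' : Fin m → Bool) (b b' : Fin r → Bool) :
    ∑ i : Fin (m + r), (if (i : ℕ) < m then (if Fin.append a b i then (1 : ℤ) else -1)
        else (if Fin.append a' b' i then (1 : ℤ) else -1)) =
      ∑ i, (if a i then (1 : ℤ) else -1) + ∑ i, (if b' i then (1 : ℤ) else -1) := by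
  simp [Fin.sum_univ_add]

lemma countBoth_add {m r c : ℕ} (hmc : m ≤ c) (h : m + r = 2 * c) :
    countBoth (m + r) m = 2 ^ m * ∑ a : Fin m → Bool, r.choose (c - ones a) ^ 2 := by
  have hboth : ∀ (a a' : Fin m → Bool) (b b' : Fin r → Bool),
      ∑ i, (if Fin.append a b i then (1 : ℤ) else -1) = 0 ∧
      ∑ i : Fin (m + r), (if (i : ℕ) < m then (if Fin.append a b i then (1 : ℤ) else -1)
        else (if Fin.append a' b' i then (1 : ℤ) else -1)) = 0 ↔
      ones a + ones b = c ∧ ones a + ones b' = c := by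
    intro a a' b b'
    rw [mixed_spin_sum_append, spin_sum_eq_zero_iff h, ones_append, spin_sum_eq, spin_sum_eq]
    simp only [Fintype.card_fin]
    omega
  rw [countBoth, card_filter, Fintype.sum_prod_type, sum_fun_fin_add, mul_sum]
  refine sum_congr rfl fun a _ => ?_
  refine (sum_congr rfl fun b _ => sum_fun_fin_add _).trans ?_
  have hsplit : ∀ x y : Fin r → Bool,
      (if ones a + ones x = c ∧ ones a + ones y = c then 1 else 0 : ℕ) =
        (if ones a + ones x = c then 1 else 0) * (if ones a + ones y = c then 1 else 0) :=
    fun _ _ => by rw [ite_zero_mul_ite_zero, mul_one]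
  simp only [hboth, hsplit, ← mul_sum, ← sum_mul, sum_const, card_univ,
    Fintype.card_fun, Fintype.card_bool, Fintype.card_fin, smul_eq_mul, ← card_filter,
    card_ones_add_eq a ((ones_le_card a).trans (by simpa using hmc))]
  ring

lemma card_mul_sum_sq_div_sq_sub_one {ι : Type*} [Fintype ι] [Nonempty ι] (g : ι → ℝ)
    (hg : ∑ i, g i ≠ 0) :
    (Fintype.card ι : ℝ) * (∑ i, g i ^ 2) / (∑ i, g i) ^ 2 - 1 =
      (∑ i, ((Fintype.card ι : ℝ) * g i / ∑ j, g j - 1) ^ 2) / Fintype.card ι := by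
  have hN : (Fintype.card ι : ℝ) ≠ 0 := by positivity
  simp only [sub_sq, sum_add_distrib, sum_sub_distrib, div_pow, mul_pow, ← sum_div, ← mul_sum,
    one_pow, mul_one, sum_const, card_univ, nsmul_eq_mul]
  field_simp
  ring

lemma cast_choose_two_mul_self_pos (c : ℕ) : (0 : ℝ) < (2 * c).choose c := by
  exact_mod_cast Nat.choose_pos (by omega)

/-- `P[ξ₁+⋯+ξ_{2c} = 0 | exactly k of ξ₁,…,ξ_m are +1] / P[ξ₁+⋯+ξ_{2c} = 0]`, for `k ≤ m ≤ c`. -/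
noncomputable def likelihoodRatio (c m k : ℕ) : ℝ :=
  2 ^ m * (2 * c - m).choose (c - k) / (2 * c).choose c

lemma likelihoodRatio_zero (c : ℕ) : likelihoodRatio c 0 0 = 1 := by
  simp [likelihoodRatio, (cast_choose_two_mul_self_pos c).ne']

lemma likelihoodRatio_two_mul_succ {c k : ℕ} (hk : k < c) :
    likelihoodRatio c (2 * (k + 1)) (k + 1) =
      likelihoodRatio c (2 * k) k * (1 + 1 / (2 * c - 2 * k - 1)) := by
  obtain ⟨a, rfl⟩ : ∃ a, c = k + 1 + a := ⟨c - (k + 1), by omega⟩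
  have hrec := Nat.succ_mul_centralBinom_succ a
  simp only [Nat.centralBinom_eq_two_mul_choose] at hrec
  simp only [likelihoodRatio]
  rw [show 2 * (k + 1 + a) - 2 * (k + 1) = 2 * a by omega,
    show k + 1 + a - (k + 1) = a by omega, show 2 * (k + 1 + a) - 2 * k = 2 * (a + 1) by omega,
    show k + 1 + a - k = a + 1 by omega]
  have hrec' : ((a : ℝ) + 1) * (2 * (a + 1)).choose (a + 1) =
      2 * (2 * a + 1) * (2 * a).choose a := by
    exact_mod_cast hrec
  have hN := cast_choose_two_mul_self_pos (k + 1 + a)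
  push_cast
  rw [show 2 * ((k : ℝ) + 1 + a) - 2 * k - 1 = 2 * a + 1 by ring, pow_mul, pow_mul]
  field_simp
  linear_combination (-2 * (4 : ℝ) ^ k) * hrec'

lemma likelihoodRatio_succ {c m k : ℕ} (hm : m < c) (hk : k ≤ m) :
    likelihoodRatio c (m + 1) k =
      likelihoodRatio c m k * (1 - ((m : ℝ) - 2 * k) / (2 * c - m)) := by
  obtain ⟨j, rfl⟩ : ∃ j, m = k + j := ⟨m - k, by omega⟩
  obtain ⟨e, rfl⟩ : ∃ e, c = k + j + 1 + e := ⟨c - (k + j + 1), by omega⟩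
  have hrec := Nat.choose_mul_succ_eq (k + j + 1 + 2 * e) (j + 1 + e)
  rw [show k + j + 1 + 2 * e + 1 - (j + 1 + e) = k + 1 + e by omega,
    show k + j + 1 + 2 * e + 1 = k + j + 2 + 2 * e by omega] at hrec
  have hrec' : ((k + j + 1 + 2 * e).choose (j + 1 + e) : ℝ) * (k + j + 2 + 2 * e) =
      (k + j + 2 + 2 * e).choose (j + 1 + e) * (k + 1 + e) := by
    exact_mod_cast hrec
  simp only [likelihoodRatio]
  rw [show 2 * (k + j + 1 + e) - (k + j + 1) = k + j + 1 + 2 * e by omega,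
    show 2 * (k + j + 1 + e) - (k + j) = k + j + 2 + 2 * e by omega,
    show k + j + 1 + e - k = j + 1 + e by omega]
  have hN := cast_choose_two_mul_self_pos (k + j + 1 + e)
  push_cast
  rw [show 2 * ((k : ℝ) + j + 1 + e) - (k + j) = k + j + 2 + 2 * e by ring, pow_succ]
  field_simp
  linear_combination 2 * hrec'

lemma likelihoodRatio_eq_prod {c k d : ℕ} (h : 2 * k + d ≤ c) :
    likelihoodRatio c (2 * k + d) k =
      (∏ j ∈ range k, (1 + 1 / (2 * (c : ℝ) - 2 * j - 1))) *
        ∏ x ∈ range d, (1 - (x : ℝ) / (2 * c - 2 * k - x)) := by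
  induction d with
  | zero =>
    induction k with
    | zero => simp [likelihoodRatio_zero]
    | succ k ih =>
      rw [add_zero, likelihoodRatio_two_mul_succ (by omega), ← add_zero (2 * k), ih (by omega)]
      simp [prod_range_succ]
  | succ d ih =>
    rw [← add_assoc, likelihoodRatio_succ (by omega) (by omega), ih (by omega), prod_range_succ,
      mul_assoc]
    congr 2
    push_cast
    ring

lemma abs_prod_one_add_sub_one_le {ι : Type*} (s : Finset ι) (x : ι → ℝ)
    (hx : ∑ i ∈ s, |x i| ≤ 1) : |∏ i ∈ s, (1 + x i) - 1| ≤ 2 * ∑ i ∈ s, |x i| := by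
  set S := ∑ i ∈ s, |x i|
  have hS : |S| = S := abs_of_nonneg (sum_nonneg fun i _ => abs_nonneg _)
  calc |∏ i ∈ s, (1 + x i) - 1| ≤ Real.exp S - 1 := s.norm_prod_one_add_sub_one_le x
    _ ≤ |Real.exp S - 1| := le_abs_self _
    _ ≤ 2 * |S| := Real.abs_exp_sub_one_le (hS.symm ▸ hx)
    _ = 2 * S := by rw [hS]

lemma sum_range_cast_mul_two_le (d : ℕ) : (∑ x ∈ range d, (x : ℝ)) * 2 ≤ (d : ℝ) ^ 2 := by
  have h : (∑ x ∈ range d, x) * 2 ≤ d ^ 2 := by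
    rw [sum_range_id_mul_two, sq]; exact Nat.mul_le_mul_left _ (Nat.sub_le _ _)
  rw [← Nat.cast_sum]
  exact_mod_cast h

lemma abs_likelihoodRatio_sub_one_le_of_two_mul_le {c m k : ℕ} (hk : 2 * k ≤ m)
    (hm : m ^ 2 ≤ 2 * c) : |likelihoodRatio c m k - 1| ≤ (m + ((m : ℝ) - 2 * k) ^ 2) / c := by
  obtain ⟨d, rfl⟩ : ∃ d, m = 2 * k + d := ⟨m - 2 * k, by omega⟩
  have hmc : 2 * k + d ≤ c := by nlinarith
  have hkd : 2 * k + d ^ 2 ≤ 2 * c := by nlinarith [Nat.le_self_pow two_ne_zero k]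
  have hc : (0 : ℝ) ≤ c := c.cast_nonneg
  set x : ℕ ⊕ ℕ → ℝ := Sum.elim (fun j => 1 / (2 * (c : ℝ) - 2 * j - 1))
    (fun y => -((y : ℝ) / (2 * c - 2 * k - y))) with hx
  have hprod : likelihoodRatio c (2 * k + d) k = ∏ i ∈ (range k).disjSum (range d), (1 + x i) := by
    rw [likelihoodRatio_eq_prod hmc, prod_disjSum]
    simp [hx, sub_eq_add_neg]
  have hfirst : ∀ j ∈ range k, |1 / (2 * (c : ℝ) - 2 * j - 1)| ≤ 1 / c := by
    intro j hj
    have : (2 * j + 2 : ℝ) ≤ c := by exact_mod_cast (by simp at hj; omega : 2 * j + 2 ≤ c)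
    rw [abs_of_pos (by apply one_div_pos.2; linarith)]
    exact one_div_le_one_div_of_le (by linarith) (by linarith)
  have hsecond : ∀ y ∈ range d, |-((y : ℝ) / (2 * c - 2 * k - y))| ≤ y / c := by
    intro y hy
    have : (2 * k + y + 1 : ℝ) ≤ c := by exact_mod_cast (by simp at hy; omega : 2 * k + y + 1 ≤ c)
    rw [abs_neg, abs_of_nonneg (div_nonneg y.cast_nonneg (by linarith))]
    exact div_le_div_of_nonneg_left y.cast_nonneg (by linarith) (by linarith)
  have hsum : ∑ i ∈ (range k).disjSum (range d), |x i| ≤ (2 * k + d ^ 2) / (2 * c) := by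
    rw [sum_disjSum]
    calc _ ≤ ∑ j ∈ range k, 1 / (c : ℝ) + ∑ y ∈ range d, (y : ℝ) / c :=
          add_le_add (sum_le_sum hfirst) (sum_le_sum hsecond)
      _ = (2 * k + (∑ y ∈ range d, (y : ℝ)) * 2) / (2 * c) := by
          rw [← sum_div, ← sum_div, sum_const, card_range, nsmul_eq_mul]; ring
      _ ≤ (2 * k + d ^ 2) / (2 * c) := by
          gcongr; exact sum_range_cast_mul_two_le d
  have hle : (2 * k + d ^ 2 : ℝ) / (2 * c) ≤ 1 :=
    div_le_one_of_le₀ (by exact_mod_cast hkd) (by positivity)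
  calc |likelihoodRatio c (2 * k + d) k - 1| ≤ 2 * ((2 * k + d ^ 2) / (2 * c)) := by
        rw [hprod]
        exact (abs_prod_one_add_sub_one_le _ _ (hsum.trans hle)).trans (by linarith)
    _ = (2 * k + d ^ 2) / c := by field_simp
    _ ≤ _ := by
        refine div_le_div_of_nonneg_right ?_ hc
        push_cast
        linarith [d.cast_nonneg (α := ℝ)]

lemma likelihoodRatio_sub_right {c m k : ℕ} (hk : k ≤ m) (hm : m ≤ c) :
    likelihoodRatio c m (m - k) = likelihoodRatio c m k := by
  rw [likelihoodRatio, likelihoodRatio, ← Nat.choose_symm (by omega : c - k ≤ 2 * c - m),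
    show 2 * c - m - (c - k) = c - (m - k) by omega]

lemma abs_likelihoodRatio_sub_one_le {c m k : ℕ} (hk : k ≤ m) (hm : m ^ 2 ≤ 2 * c) :
    |likelihoodRatio c m k - 1| ≤ (m + ((m : ℝ) - 2 * k) ^ 2) / c := by
  rcases le_total (2 * k) m with h | h
  · exact abs_likelihoodRatio_sub_one_le_of_two_mul_le h hm
  · rw [← likelihoodRatio_sub_right hk (by nlinarith)]
    convert abs_likelihoodRatio_sub_one_le_of_two_mul_le (k := m - k) (by omega) hm using 3
    push_cast [hk]
    ring

lemma alphaCorr_sub_one_eq {c m : ℕ} (hmc : m ≤ c) :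
    alphaCorr (2 * c) m - 1 =
      (∑ a : Fin m → Bool, (likelihoodRatio c m (ones a) - 1) ^ 2) / 2 ^ m := by
  obtain ⟨r, hr⟩ : ∃ r, m + r = 2 * c := ⟨2 * c - m, by omega⟩
  have hZ : (countZero (2 * c) : ℝ) = ∑ a : Fin m → Bool, (r.choose (c - ones a) : ℝ) := by
    rw [← hr, countZero_add hmc hr]; push_cast; rfl
  have hB : (countBoth (2 * c) m : ℝ) =
      2 ^ m * ∑ a : Fin m → Bool, (r.choose (c - ones a) : ℝ) ^ 2 := by
    rw [← hr, countBoth_add hmc hr]; push_cast; rfl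
  have hZc : ∑ a : Fin m → Bool, (r.choose (c - ones a) : ℝ) = (2 * c).choose c := by
    rw [← hZ, countZero_two_mul]
  have halpha : alphaCorr (2 * c) m = countBoth (2 * c) m / (countZero (2 * c) : ℝ) ^ 2 := by
    rw [alphaCorr]; field_simp; ring
  have hcard : (Fintype.card (Fin m → Bool) : ℝ) = 2 ^ m := by simp
  rw [halpha, hB, hZ, ← hcard,
    card_mul_sum_sq_div_sq_sub_one _ (hZc ▸ (cast_choose_two_mul_self_pos c).ne'), hZc, hcard,
    show r = 2 * c - m by omega]
  rfl

lemma sum_sq_likelihoodRatio_sub_one_le {c m : ℕ} (hm : m ^ 2 ≤ 2 * c) :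
    ∑ a : Fin m → Bool, (likelihoodRatio c m (ones a) - 1) ^ 2 ≤
      6 * (m : ℝ) ^ 2 * 2 ^ m / c ^ 2 := by
  calc ∑ a : Fin m → Bool, (likelihoodRatio c m (ones a) - 1) ^ 2
      ≤ ∑ a : Fin m → Bool, (((m : ℝ) + ((m : ℝ) - 2 * ones a) ^ 2) / c) ^ 2 := by
        refine sum_le_sum fun a _ => ?_
        rw [← sq_abs]
        have hk : ones a ≤ m := by simpa using ones_le_card a
        exact pow_le_pow_left₀ (abs_nonneg _) (abs_likelihoodRatio_sub_one_le hk hm) 2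
    _ = ((m : ℝ) ^ 2 * 2 ^ m + 2 * m * (m * 2 ^ m) + (3 * m ^ 2 - 2 * m) * 2 ^ m) / c ^ 2 := by
        simp only [div_pow, ← sum_div, add_sq, sum_add_distrib, ← mul_sum, ← pow_mul,
          sum_sub_two_mul_ones_sq, sum_sub_two_mul_ones_pow_four, sum_const_boolFun]
        ring
    _ ≤ 6 * m ^ 2 * 2 ^ m / c ^ 2 := by
        gcongr
        nlinarith [m.cast_nonneg (α := ℝ), pow_pos (two_pos (α := ℝ)) m]

/-- There is `C > 0` such that for every even `n ≥ 2` and `0 ≤ m ≤ n^{1/2}`,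
`|α(n,m) − 1| ≤ C m²/n²`. -/
theorem alpha_close_to_one_quadratic :
    ∃ C : ℝ, 0 < C ∧
      ∀ n : ℕ, Even n → 2 ≤ n →
      ∀ m : ℕ, (m : ℝ) ≤ Real.sqrt n →
        |alphaCorr n m - 1| ≤ C * (m : ℝ) ^ 2 / (n : ℝ) ^ 2 := by
  refine ⟨24, by norm_num, fun n ⟨c, hc⟩ _ m hm => ?_⟩
  obtain rfl : n = 2 * c := by omega
  have hm2 : m ^ 2 ≤ 2 * c := by
    have := (Real.le_sqrt m.cast_nonneg (by positivity)).1 hm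
    exact_mod_cast this
  have hmc : m ≤ c := by nlinarith
  have hdev := alphaCorr_sub_one_eq hmc
  have hnonneg : 0 ≤ alphaCorr (2 * c) m - 1 := by
    rw [hdev]; positivity
  rw [abs_of_nonneg hnonneg, hdev, div_le_iff₀ (by positivity)]
  calc _ ≤ 6 * (m : ℝ) ^ 2 * 2 ^ m / c ^ 2 := sum_sq_likelihoodRatio_sub_one_le hm2
    _ = _ := by push_cast; ring
end

section
/- Let V be a linear subspace of ℝ^n of dimension r. Then V contains at most 2^r vectors all of whose coordinates lie in {−1,+1}. (Any vector in V is determined by its values on a set of r coordinates on which a basis of V has full rank.) -/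
/-!
Restricting the coordinate functionals `v ↦ v i` to `V` gives a family in the dual of `V`; a
maximal linearly independent subfamily has at most `dim V` members and spans all the others.
So a vector of `V` is determined by its coordinates in a set `s` of at most `dim V` indices,
and the sign vectors of `V` inject into the `2 ^ #s` sign vectors on `s`.
-/

open Module

theorem Set.ncard_setOf_forall_eq_or_eq {ι R : Type*} [Finite ι] {a b : R} (hab : a ≠ b) :
    {w : ι → R | ∀ i, w i = a ∨ w i = b}.ncard = 2 ^ Nat.card ι := by
  have hpi : {w : ι → R | ∀ i, w i = a ∨ w i = b} = Set.univ.pi fun _ => {a, b} := by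
    ext w
    simp [Set.mem_pi]
  rw [hpi, ← Nat.card_coe_set_eq, Nat.card_congr (Equiv.Set.univPi _), Nat.card_fun,
    Nat.card_coe_set_eq, Set.ncard_pair hab]

namespace Submodule

variable {K ι : Type*} [Field K] (V : Submodule K (ι → K)) [FiniteDimensional K V]

theorem exists_finset_card_le_finrank_forall_eq_zero :
    ∃ s : Finset ι, s.card ≤ finrank K V ∧
      ∀ u ∈ V, (∀ i ∈ s, u i = 0) → u = 0 := by
  let coord : ι → Dual K V := fun i => (LinearMap.proj i).comp V.subtype
  obtain ⟨b, -, -, hspan, hli⟩ :=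
    exists_linearIndepOn_extension (linearIndepOn_empty K coord) (Set.empty_subset Set.univ)
  have : Finite b := LinearIndependent.finite hli
  cases nonempty_fintype b
  refine ⟨b.toFinset, ?_, fun u hu hzero => ?_⟩
  · calc b.toFinset.card = Fintype.card b := Set.toFinset_card b
      _ ≤ finrank K (Dual K V) := LinearIndependent.fintype_card_le_finrank hli
      _ = finrank K V := Subspace.dual_finrank_eq
  · have hcoann : (⟨u, hu⟩ : V) ∈ (span K (coord '' b)).dualCoannihilator := by
      rw [← SetLike.mem_coe, coe_dualCoannihilator_span]
      rintro _ ⟨i, hi, rfl⟩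
      exact hzero i (Set.mem_toFinset.mpr hi)
    funext j
    exact (mem_dualCoannihilator _).mp hcoann (coord j) (hspan ⟨j, trivial, rfl⟩)

theorem exists_finset_card_le_finrank_injOn_restrict :
    ∃ s : Finset ι, s.card ≤ finrank K V ∧ Set.InjOn s.restrict (V : Set (ι → K)) := by
  obtain ⟨s, hcard, hzero⟩ := V.exists_finset_card_le_finrank_forall_eq_zero
  refine ⟨s, hcard, fun u hu w hw huw => sub_eq_zero.mp (hzero _ (V.sub_mem hu hw) ?_)⟩
  intro i hi
  simpa [sub_eq_zero] using congrFun huw ⟨i, hi⟩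

end Submodule

/-- An `r`-dimensional linear subspace of `ℝⁿ` contains at most `2^r` vectors all of
whose coordinates lie in `{−1, +1}`. -/
theorem sign_vectors_in_subspace_le (n r : ℕ) (V : Submodule ℝ (Fin n → ℝ))
    (hV : Module.finrank ℝ V = r) :
    Set.ncard {v : Fin n → ℝ | v ∈ V ∧ ∀ i, v i = 1 ∨ v i = -1} ≤ 2 ^ r := by
  set S := {v : Fin n → ℝ | v ∈ V ∧ ∀ i, v i = 1 ∨ v i = -1}
  obtain ⟨s, hcard, hinj⟩ := V.exists_finset_card_le_finrank_injOn_restrict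
  have hmaps : s.restrict '' S ⊆ {w : s → ℝ | ∀ i, w i = 1 ∨ w i = -1} := by
    rintro _ ⟨v, hv, rfl⟩ i
    exact hv.2 i
  calc S.ncard = (s.restrict '' S).ncard :=
        ((hinj.mono fun _ hv => hv.1).ncard_image).symm
    _ ≤ {w : s → ℝ | ∀ i, w i = 1 ∨ w i = -1}.ncard :=
        Set.ncard_le_ncard hmaps (Set.Finite.pi' fun _ => Set.toFinite {1, -1})
    _ = 2 ^ s.card := by
        rw [Set.ncard_setOf_forall_eq_or_eq (by norm_num), Nat.card_eq_fintype_card,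
          Fintype.card_coe]
    _ ≤ 2 ^ r := pow_le_pow_right₀ (by norm_num) (hV ▸ hcard)
end

section
/- Let n, d, s be positive integers with s even and s ≤ d. Let M be a random n×d matrix with independent entries uniform on {−1,+1}, and let X = X(M) be the number of s-element subsets S ⊆ {1,…,d} such that the columns of M indexed by S sum to the zero vector of ℝ^n. Then E[X] = C(d,s)·(2^{−s}·C(s,s/2))^n, and Var[X] = (E[X])² · Σ_{m=0}^{s} [C(s,m)·C(d−s,s−m)/C(d,s)] · (α(s,m)^n − 1), where C(a,b) denotes the binomial coefficient a choose b. -/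
open scoped Classical

/-- The ±1 integer matrix associated to a Boolean matrix. -/
def signMatrixInt (n d : ℕ) (f : Matrix (Fin n) (Fin d) Bool) : Matrix (Fin n) (Fin d) ℤ :=
  fun i j => if f i j then 1 else -1

/-- `X(M)`: the number of `s`-element subsets of the columns of `M` that sum to the zero
vector. -/
def Xcount (n d s : ℕ) (M : Matrix (Fin n) (Fin d) ℤ) : ℕ :=
  (Finset.univ.filter fun S : Finset (Fin d) =>
    S.card = s ∧ ∀ i : Fin n, (∑ j ∈ S, M i j) = 0).card

/-- The expectation `E[X]` over a uniformly random `n × d` `±1` matrix. -/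
noncomputable def EX (n d s : ℕ) : ℝ :=
  (∑ f : Matrix (Fin n) (Fin d) Bool, (Xcount n d s (signMatrixInt n d f) : ℝ)) / 2 ^ (n * d)

/-- The second moment `E[X²]` over a uniformly random `n × d` `±1` matrix. -/
noncomputable def EX2 (n d s : ℕ) : ℝ :=
  (∑ f : Matrix (Fin n) (Fin d) Bool, ((Xcount n d s (signMatrixInt n d f) : ℝ)) ^ 2)
    / 2 ^ (n * d)


set_option maxHeartbeats 1600000

open Finset

def sgn (b : Bool) : ℤ := if b then 1 else -1

def Ncnt (k : ℕ) (v : ℤ) : ℕ :=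
  (Finset.univ.filter fun ξ : Fin k → Bool => (∑ i : Fin k, sgn (ξ i)) = v).card

/-- Independence factorization: if `F` depends only on coordinates in `C` and `G` only on
coordinates outside `C`, then the sums multiply. -/
lemma sum_mul_sum_local {α : Type*} [Fintype α] [DecidableEq α] (C : Finset α)
    (F G : (α → Bool) → ℕ)
    (hF : ∀ g g' : α → Bool, (∀ j ∈ C, g j = g' j) → F g = F g')
    (hG : ∀ g g' : α → Bool, (∀ j ∉ C, g j = g' j) → G g = G g') :
    (∑ g : α → Bool, F g) * (∑ g : α → Bool, G g)
      = 2 ^ Fintype.card α * ∑ g : α → Bool, F g * G g := by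
  classical
  let Φ : ((α → Bool) × (α → Bool)) ≃ ((α → Bool) × (α → Bool)) :=
    { toFun := fun p => (C.piecewise p.1 p.2, C.piecewise p.2 p.1)
      invFun := fun p => (C.piecewise p.1 p.2, C.piecewise p.2 p.1)
      left_inv := fun p => by
        refine Prod.ext (funext fun j => ?_) (funext fun j => ?_) <;>
          by_cases h : j ∈ C <;>
          simp [Finset.piecewise_eq_of_mem, Finset.piecewise_eq_of_notMem, h]
      right_inv := fun p => by
        refine Prod.ext (funext fun j => ?_) (funext fun j => ?_) <;>
          by_cases h : j ∈ C <;>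
          simp [Finset.piecewise_eq_of_mem, Finset.piecewise_eq_of_notMem, h] }
  calc (∑ g : α → Bool, F g) * (∑ g : α → Bool, G g)
      = ∑ p : (α → Bool) × (α → Bool), F p.1 * G p.2 := by
        rw [Finset.sum_mul_sum]
        exact (Fintype.sum_prod_type (fun p : (α → Bool) × (α → Bool) => F p.1 * G p.2)).symm
    _ = ∑ p : (α → Bool) × (α → Bool), F (Φ p).1 * G (Φ p).2 :=
        (Equiv.sum_comp Φ fun p => F p.1 * G p.2).symm
    _ = ∑ p : (α → Bool) × (α → Bool), F p.1 * G p.1 := by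
        refine Finset.sum_congr rfl fun p _ => ?_
        have h1 : F (C.piecewise p.1 p.2) = F p.1 :=
          hF _ _ fun j hj => C.piecewise_eq_of_mem _ _ hj
        have h2 : G (C.piecewise p.2 p.1) = G p.1 :=
          hG _ _ fun j hj => C.piecewise_eq_of_notMem _ _ hj
        simp only [Φ, Equiv.coe_fn_mk, h1, h2]
    _ = 2 ^ Fintype.card α * ∑ g : α → Bool, F g * G g := by
        rw [Fintype.sum_prod_type, Finset.mul_sum]
        refine Finset.sum_congr rfl fun g _ => ?_
        simp [Finset.sum_const, Finset.card_univ, Fintype.card_fun, Fintype.card_bool,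
          mul_comm]

/-- Counting boolean functions with prescribed signed sum over a set `S` of size `k`. -/
lemma card_filter_sum_restrict {α : Type*} [Fintype α] [DecidableEq α]
    (S : Finset α) {k : ℕ} (hk : S.card = k) (v : ℤ) :
    (Finset.univ.filter fun g : α → Bool => (∑ j ∈ S, sgn (g j)) = v).card
      = Ncnt k v * 2 ^ (Fintype.card α - k) := by
  classical
  set r := Fintype.card α - k with hr
  have hc : (Sᶜ).card = r := by rw [Finset.card_compl, hk]
  let eS : Fin k ≃ {x // x ∈ S} := (Finset.equivFinOfCardEq hk).symm
  let eC : Fin r ≃ {x // ¬ x ∈ S} :=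
    ((Finset.equivFinOfCardEq hc).symm).trans (Equiv.subtypeEquivRight fun x => by simp)
  let E : (Fin k ⊕ Fin r) ≃ α := (Equiv.sumCongr eS eC).trans (Equiv.sumCompl (· ∈ S))
  have hsum : ∀ g : α → Bool,
      (∑ j ∈ S, sgn (g j)) = ∑ i : Fin k, sgn (g (E (Sum.inl i))) := by
    intro g
    rw [← Finset.sum_coe_sort S (fun j => sgn (g j))]
    exact (Equiv.sum_comp eS fun x : {x // x ∈ S} => sgn (g (x : α))).symm
  rw [Finset.card_filter]
  have step1 : (∑ g : α → Bool, if (∑ j ∈ S, sgn (g j)) = v then (1:ℕ) else 0)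
      = ∑ G : (Fin k ⊕ Fin r) → Bool,
          if (∑ i : Fin k, sgn (G (Sum.inl i))) = v then (1:ℕ) else 0 := by
    refine Fintype.sum_equiv (Equiv.arrowCongr E.symm (Equiv.refl Bool)) _ _ fun g => ?_
    have : (∑ j ∈ S, sgn (g j))
        = ∑ i : Fin k, sgn ((Equiv.arrowCongr E.symm (Equiv.refl Bool) g) (Sum.inl i)) := by
      rw [hsum g]
      refine Finset.sum_congr rfl fun i _ => ?_
      simp [Equiv.arrowCongr]
    rw [this]
  rw [step1]
  have step2 : (∑ G : (Fin k ⊕ Fin r) → Bool,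
        if (∑ i : Fin k, sgn (G (Sum.inl i))) = v then (1:ℕ) else 0)
      = ∑ p : (Fin k → Bool) × (Fin r → Bool),
          if (∑ i : Fin k, sgn (p.1 i)) = v then (1:ℕ) else 0 := by
    exact Fintype.sum_equiv (Equiv.sumArrowEquivProdArrow _ _ _) _ _ fun G => rfl
  rw [step2, Fintype.sum_prod_type]
  have : ∀ x : Fin k → Bool, (∑ _y : Fin r → Bool,
      if (∑ i : Fin k, sgn (x i)) = v then (1:ℕ) else 0)
      = (if (∑ i : Fin k, sgn (x i)) = v then (1:ℕ) else 0) * 2 ^ r := by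
    intro x
    rw [Finset.sum_const, Finset.card_univ, Fintype.card_fun, Fintype.card_bool,
      Fintype.card_fin, smul_eq_mul, mul_comm]
  rw [Finset.sum_congr rfl fun x _ => this x, ← Finset.sum_mul, Ncnt, Finset.card_filter]


lemma sum_sgn_mem_Icc {α : Type*} (I : Finset α) (g : α → Bool) (s : ℕ) (hs : I.card ≤ s) :
    (∑ j ∈ I, sgn (g j)) ∈ Finset.Icc (-(s:ℤ)) (s:ℤ) := by
  have h1 : (∑ j ∈ I, sgn (g j)) ≤ ∑ _j ∈ I, (1:ℤ) := by
    refine Finset.sum_le_sum fun j _ => ?_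
    unfold sgn; split <;> omega
  have h2 : (∑ _j ∈ I, (-1:ℤ)) ≤ ∑ j ∈ I, sgn (g j) := by
    refine Finset.sum_le_sum fun j _ => ?_
    unfold sgn; split <;> omega
  simp only [Finset.sum_const, nsmul_eq_mul, mul_one, mul_neg] at h1 h2
  rw [Finset.mem_Icc]
  have hcs : (I.card : ℤ) ≤ (s : ℤ) := by exact_mod_cast hs
  omega

lemma count_pair_conditions {α : Type*} [Fintype α] [DecidableEq α]
    (I A B : Finset α) (hIA : Disjoint I A) (hIB : Disjoint I B) (hAB : Disjoint A B)
    (s : ℕ) (hms : I.card ≤ s) :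
    (Finset.univ.filter fun g : α → Bool =>
        (∑ j ∈ I, sgn (g j)) + (∑ j ∈ A, sgn (g j)) = 0 ∧
        (∑ j ∈ I, sgn (g j)) + (∑ j ∈ B, sgn (g j)) = 0).card
      * (2 ^ (I.card + A.card + B.card) * 2 ^ (2 * Fintype.card α))
      = 2 ^ (3 * Fintype.card α) *
        ∑ v ∈ Finset.Icc (-(s:ℤ)) (s:ℤ),
          Ncnt I.card v * (Ncnt A.card (-v) * Ncnt B.card (-v)) := by
  classical
  set D := Fintype.card α with hD
  have hmD : I.card ≤ D := by rw [hD, ← Finset.card_univ]; exact Finset.card_le_card (Finset.subset_univ I)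
  have haD : A.card ≤ D := by rw [hD, ← Finset.card_univ]; exact Finset.card_le_card (Finset.subset_univ A)
  have hbD : B.card ≤ D := by rw [hD, ← Finset.card_univ]; exact Finset.card_le_card (Finset.subset_univ B)
  set m := I.card
  set a := A.card
  set b := B.card
  -- indicator decomposition
  have hind : ∀ g : α → Bool,
      (if ((∑ j ∈ I, sgn (g j)) + (∑ j ∈ A, sgn (g j)) = 0 ∧
           (∑ j ∈ I, sgn (g j)) + (∑ j ∈ B, sgn (g j)) = 0) then (1:ℕ) else 0)
        = ∑ v ∈ Finset.Icc (-(s:ℤ)) (s:ℤ),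
            (if (∑ j ∈ I, sgn (g j)) = v then (1:ℕ) else 0) *
              ((if (∑ j ∈ A, sgn (g j)) = -v then (1:ℕ) else 0) *
               (if (∑ j ∈ B, sgn (g j)) = -v then (1:ℕ) else 0)) := by
    intro g
    rw [Finset.sum_eq_single (∑ j ∈ I, sgn (g j))]
    · by_cases h1 : (∑ j ∈ A, sgn (g j)) = -(∑ j ∈ I, sgn (g j)) <;>
        by_cases h2 : (∑ j ∈ B, sgn (g j)) = -(∑ j ∈ I, sgn (g j)) <;>
        simp [h1, h2] <;> omega
    · intro v _ hne
      have : ¬ ((∑ j ∈ I, sgn (g j)) = v) := fun h => hne h.symm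
      simp [this]
    · intro h
      exact absurd (sum_sgn_mem_Icc I g s hms) h
  rw [Finset.card_filter, Finset.sum_congr rfl fun g _ => hind g]
  rw [Finset.sum_comm (s := (Finset.univ : Finset (α → Bool))) (t := Finset.Icc (-(s:ℤ)) (s:ℤ))]
  rw [Finset.sum_mul, Finset.mul_sum]
  refine Finset.sum_congr rfl fun v _ => ?_
  -- per-v identity
  set F : (α → Bool) → ℕ := fun g => if (∑ j ∈ I, sgn (g j)) = v then 1 else 0 with hFdef
  set F' : (α → Bool) → ℕ := fun g => if (∑ j ∈ A, sgn (g j)) = -v then 1 else 0 with hF'def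
  set G' : (α → Bool) → ℕ := fun g => if (∑ j ∈ B, sgn (g j)) = -v then 1 else 0 with hG'def
  have locF : ∀ g g' : α → Bool, (∀ j ∈ I, g j = g' j) → F g = F g' := by
    intro g g' h
    simp only [hFdef]
    rw [Finset.sum_congr rfl fun j hj => by rw [h j hj]]
  have locF' : ∀ g g' : α → Bool, (∀ j ∈ A, g j = g' j) → F' g = F' g' := by
    intro g g' h
    simp only [hF'def]
    rw [Finset.sum_congr rfl fun j hj => by rw [h j hj]]
  have locG' : ∀ g g' : α → Bool, (∀ j ∉ A, g j = g' j) → G' g = G' g' := by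
    intro g g' h
    simp only [hG'def]
    rw [Finset.sum_congr rfl fun j hj => by
      rw [h j (Finset.disjoint_right.mp hAB hj)]]
  have locG : ∀ g g' : α → Bool, (∀ j ∉ I, g j = g' j) → F' g * G' g = F' g' * G' g' := by
    intro g g' h
    have e1 : F' g = F' g' := by
      simp only [hF'def]
      rw [Finset.sum_congr rfl fun j hj => by rw [h j (Finset.disjoint_right.mp hIA hj)]]
    have e2 : G' g = G' g' := by
      simp only [hG'def]
      rw [Finset.sum_congr rfl fun j hj => by rw [h j (Finset.disjoint_right.mp hIB hj)]]
    rw [e1, e2]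
  have e1 := sum_mul_sum_local I F (fun g => F' g * G' g) locF locG
  have e2 := sum_mul_sum_local A F' G' locF' locG'
  have r1 : (∑ g : α → Bool, F g) = Ncnt m v * 2 ^ (D - m) := by
    rw [hFdef, ← Finset.card_filter]
    exact card_filter_sum_restrict I rfl v
  have r2 : (∑ g : α → Bool, F' g) = Ncnt a (-v) * 2 ^ (D - a) := by
    rw [hF'def, ← Finset.card_filter]
    exact card_filter_sum_restrict A rfl (-v)
  have r3 : (∑ g : α → Bool, G' g) = Ncnt b (-v) * 2 ^ (D - b) := by
    rw [hG'def, ← Finset.card_filter]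
    exact card_filter_sum_restrict B rfl (-v)
  have pm : (2:ℕ) ^ (D - m) * 2 ^ m = 2 ^ D := by rw [← pow_add, Nat.sub_add_cancel hmD]
  have pa : (2:ℕ) ^ (D - a) * 2 ^ a = 2 ^ D := by rw [← pow_add, Nat.sub_add_cancel haD]
  have pb : (2:ℕ) ^ (D - b) * 2 ^ b = 2 ^ D := by rw [← pow_add, Nat.sub_add_cancel hbD]
  calc (∑ g : α → Bool, F g * (F' g * G' g)) * (2 ^ (m + a + b) * 2 ^ (2 * D))
      = (2 ^ D * ∑ g : α → Bool, F g * (F' g * G' g)) * (2 ^ D * (2 ^ m * 2 ^ a * 2 ^ b)) := by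
        rw [← pow_add, ← pow_add]; ring_nf
    _ = ((∑ g : α → Bool, F g) * (∑ g : α → Bool, F' g * G' g)) * (2 ^ D * (2 ^ m * 2 ^ a * 2 ^ b)) := by
        rw [e1]
    _ = ((∑ g : α → Bool, F g) * ((∑ g : α → Bool, F' g) * (∑ g : α → Bool, G' g))) * (2 ^ m * 2 ^ a * 2 ^ b) := by
        rw [e2]; ring
    _ = (Ncnt m v * (Ncnt a (-v) * Ncnt b (-v))) *
        ((2 ^ (D - m) * 2 ^ m) * ((2 ^ (D - a) * 2 ^ a) * (2 ^ (D - b) * 2 ^ b))) := by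
        rw [r1, r2, r3]; ring
    _ = 2 ^ (3 * D) * (Ncnt m v * (Ncnt a (-v) * Ncnt b (-v))) := by
        rw [pm, pa, pb]; ring

lemma rows_count' {R : Type*} [CommSemiring R] (n d : ℕ) (F : (Fin d → Bool) → R) :
    (∑ f : Fin n → Fin d → Bool, ∏ i : Fin n, F (f i)) = (∑ g : Fin d → Bool, F g) ^ n := by
  classical
  calc (∑ f : Fin n → Fin d → Bool, ∏ i : Fin n, F (f i))
      = ∑ f ∈ Fintype.piFinset (fun _ : Fin n => (Finset.univ : Finset (Fin d → Bool))),
          ∏ i : Fin n, F (f i) := by rw [Fintype.piFinset_univ]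
    _ = ∏ _i : Fin n, ∑ g : Fin d → Bool, F g :=
        (Finset.prod_univ_sum (fun _ : Fin n => (Finset.univ : Finset (Fin d → Bool)))
          (fun _ g => F g)).symm
    _ = (∑ g : Fin d → Bool, F g) ^ n := by
        rw [Finset.prod_const, Finset.card_univ, Fintype.card_fin]

lemma sum_matrix {n d : ℕ} {M : Type*} [AddCommMonoid M] (F : Matrix (Fin n) (Fin d) Bool → M) :
    (∑ f : Matrix (Fin n) (Fin d) Bool, F f) = ∑ f : Fin n → Fin d → Bool, F (Matrix.of f) :=
  (Fintype.sum_equiv (Matrix.of : (Fin n → Fin d → Bool) ≃ Matrix (Fin n) (Fin d) Bool) _ _ fun _ => rfl).symm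

lemma countZero_choose (s : ℕ) (hse : Even s) : countZero s = s.choose (s / 2) := by
  classical
  obtain ⟨t, ht⟩ := hse
  have hcond : ∀ ξ : Fin s → Bool,
      ((∑ i : Fin s, (if ξ i then (1:ℤ) else -1)) = 0
        ↔ (Finset.univ.filter fun i => ξ i = true).card = s / 2) := by
    intro ξ
    have h1 : (∑ i : Fin s, (if ξ i then (1:ℤ) else -1))
        = 2 * ((Finset.univ.filter fun i => ξ i = true).card : ℤ) - s := by
      have h2 : ∀ i : Fin s, (if ξ i then (1:ℤ) else -1)
          = 2 * (if ξ i = true then (1:ℤ) else 0) - 1 := by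
        intro i; by_cases h : ξ i <;> simp [h]
      rw [Finset.sum_congr rfl fun i _ => h2 i, Finset.sum_sub_distrib, ← Finset.mul_sum,
        Finset.sum_boole, Finset.sum_const, Finset.card_univ, Fintype.card_fin]
      simp
    rw [h1]
    constructor
    · intro h; omega
    · intro h; omega
  rw [countZero, Finset.filter_congr fun ξ _ => hcond ξ]
  have hbij : (Finset.univ.filter fun ξ : Fin s → Bool =>
        (Finset.univ.filter fun i => ξ i = true).card = s / 2).card
      = (Finset.powersetCard (s/2) (Finset.univ : Finset (Fin s))).card := by
    refine Finset.card_bij' (fun ξ _ => Finset.univ.filter fun i => ξ i = true)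
      (fun A _ => fun i => decide (i ∈ A)) ?_ ?_ ?_ ?_
    · intro ξ hξ
      rw [Finset.mem_powersetCard_univ]
      exact (Finset.mem_filter.mp hξ).2
    · intro A hA
      rw [Finset.mem_filter]
      refine ⟨Finset.mem_univ _, ?_⟩
      rw [show (Finset.univ.filter fun i => decide (i ∈ A) = true) = A from by ext i; simp]
      exact Finset.mem_powersetCard_univ.mp hA
    · intro ξ hξ; funext i; by_cases h : ξ i <;> simp [h]
    · intro A hA; ext i; simp
  rw [hbij, Finset.card_powersetCard, Finset.card_univ, Fintype.card_fin]

lemma pair_count {d : ℕ} (s m : ℕ) (S : Finset (Fin d)) (hS : S.card = s) (hm : m ≤ s) :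
    (Finset.univ.filter fun T : Finset (Fin d) => T.card = s ∧ (S ∩ T).card = m).card
      = s.choose m * (d - s).choose (s - m) := by
  classical
  have hbij : (Finset.univ.filter fun T : Finset (Fin d) => T.card = s ∧ (S ∩ T).card = m).card
      = ((Finset.powersetCard m S) ×ˢ (Finset.powersetCard (s - m) Sᶜ)).card := by
    refine Finset.card_bij' (fun T _ => (S ∩ T, T \ S)) (fun p _ => p.1 ∪ p.2) ?_ ?_ ?_ ?_
    · intro T hT
      obtain ⟨-, hTs, hTm⟩ := Finset.mem_filter.mp hT
      rw [Finset.mem_product]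
      constructor
      · rw [Finset.mem_powersetCard]
        exact ⟨Finset.inter_subset_left, hTm⟩
      · rw [Finset.mem_powersetCard]
        constructor
        · intro x hx
          rw [Finset.mem_compl]
          exact (Finset.mem_sdiff.mp hx).2
        · show (T \ S).card = s - m
          have := Finset.card_sdiff_add_card_inter T S
          rw [Finset.inter_comm T S] at this
          omega
    · intro p hp
      rw [Finset.mem_product] at hp
      obtain ⟨h1, h2⟩ := hp
      rw [Finset.mem_powersetCard] at h1 h2
      rw [Finset.mem_filter]
      have hdisj : Disjoint p.1 p.2 := by
        rw [Finset.disjoint_left]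
        intro x hx1 hx2
        exact (Finset.mem_compl.mp (h2.1 hx2)) (h1.1 hx1)
      have hSint : S ∩ (p.1 ∪ p.2) = p.1 := by
        ext x
        simp only [Finset.mem_inter, Finset.mem_union]
        constructor
        · rintro ⟨hxS, hx12⟩
          rcases hx12 with hx1 | hx2
          · exact hx1
          · exact absurd hxS (Finset.mem_compl.mp (h2.1 hx2))
        · intro hx1
          exact ⟨h1.1 hx1, Or.inl hx1⟩
      refine ⟨Finset.mem_univ _, ?_, ?_⟩
      · rw [Finset.card_union_of_disjoint hdisj, h1.2, h2.2]; omega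
      · rw [hSint, h1.2]
    · intro T hT
      dsimp only
      ext x
      simp only [Finset.mem_union, Finset.mem_inter, Finset.mem_sdiff]
      tauto
    · intro p hp
      rw [Finset.mem_product] at hp
      obtain ⟨h1, h2⟩ := hp
      rw [Finset.mem_powersetCard] at h1 h2
      have hSint : S ∩ (p.1 ∪ p.2) = p.1 := by
        ext x
        simp only [Finset.mem_inter, Finset.mem_union]
        constructor
        · rintro ⟨hxS, hx12⟩
          rcases hx12 with hx1 | hx2
          · exact hx1
          · exact absurd hxS (Finset.mem_compl.mp (h2.1 hx2))
        · intro hx1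
          exact ⟨h1.1 hx1, Or.inl hx1⟩
      have hdiff : (p.1 ∪ p.2) \ S = p.2 := by
        ext x
        simp only [Finset.mem_sdiff, Finset.mem_union]
        constructor
        · rintro ⟨hx1 | hx2, hxS⟩
          · exact absurd (h1.1 hx1) hxS
          · exact hx2
        · intro hx2
          exact ⟨Or.inr hx2, Finset.mem_compl.mp (h2.1 hx2)⟩
      rw [hSint, hdiff]
  rw [hbij, Finset.card_product, Finset.card_powersetCard, Finset.card_powersetCard,
    Finset.card_compl, Fintype.card_fin, hS]

lemma group_by_inter {d : ℕ} (s : ℕ) (S : Finset (Fin d)) (hS : S.card = s) (φ : ℕ → ℝ) :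
    (∑ T ∈ Finset.univ.filter (fun T : Finset (Fin d) => T.card = s), φ ((S ∩ T).card))
      = ∑ m ∈ Finset.range (s+1),
          ((s.choose m : ℝ) * ((d-s).choose (s-m) : ℝ)) * φ m := by
  classical
  have hmap : ∀ T ∈ Finset.univ.filter (fun T : Finset (Fin d) => T.card = s),
      (S ∩ T).card ∈ Finset.range (s+1) := by
    intro T _
    rw [Finset.mem_range]
    have : (S ∩ T).card ≤ S.card := Finset.card_le_card Finset.inter_subset_left
    omega
  rw [← Finset.sum_fiberwise_of_maps_to hmap (fun T => φ ((S ∩ T).card))]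
  refine Finset.sum_congr rfl fun m hm => ?_
  have hms : m ≤ s := by rw [Finset.mem_range] at hm; omega
  have hconst : ∀ T ∈ (Finset.univ.filter fun T : Finset (Fin d) => T.card = s).filter
      (fun T => (S ∩ T).card = m), φ ((S ∩ T).card) = φ m := by
    intro T hT
    rw [(Finset.mem_filter.mp hT).2]
  rw [Finset.sum_congr rfl hconst, Finset.sum_const, Finset.filter_filter]
  rw [show (Finset.univ.filter fun T : Finset (Fin d) => T.card = s ∧ (S ∩ T).card = m).card
      = s.choose m * (d - s).choose (s - m) from pair_count s m S hS hms]
  simp [nsmul_eq_mul]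

noncomputable def Iset (s m : ℕ) : Finset (Fin s ⊕ Fin s) :=
  (Finset.univ.filter fun i : Fin s => (i : ℕ) < m).map ⟨Sum.inl, Sum.inl_injective⟩
noncomputable def Aset (s m : ℕ) : Finset (Fin s ⊕ Fin s) :=
  (Finset.univ.filter fun i : Fin s => ¬ (i : ℕ) < m).map ⟨Sum.inl, Sum.inl_injective⟩
noncomputable def Bset (s m : ℕ) : Finset (Fin s ⊕ Fin s) :=
  (Finset.univ.filter fun i : Fin s => ¬ (i : ℕ) < m).map ⟨Sum.inr, Sum.inr_injective⟩

lemma filter_lt_card (s m : ℕ) (hm : m ≤ s) :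
    (Finset.univ.filter fun i : Fin s => (i : ℕ) < m).card = m := by
  classical
  have h : ∀ x ∈ Finset.range m, x < s := fun x hx =>
    lt_of_lt_of_le (Finset.mem_range.mp hx) hm
  have heq : (Finset.univ.filter fun i : Fin s => (i : ℕ) < m)
      = (Finset.range m).attachFin h := by
    ext i
    simp [Finset.mem_attachFin]
  rw [heq, Finset.card_attachFin, Finset.card_range]

lemma filter_not_lt_card (s m : ℕ) (hm : m ≤ s) :
    (Finset.univ.filter fun i : Fin s => ¬ (i : ℕ) < m).card = s - m := by
  classical
  have := Finset.card_filter_add_card_filter_not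
    (s := (Finset.univ : Finset (Fin s))) (fun i : Fin s => (i : ℕ) < m)
  rw [Finset.card_univ, Fintype.card_fin, filter_lt_card s m hm] at this
  omega

lemma Iset_card (s m : ℕ) (hm : m ≤ s) : (Iset s m).card = m := by
  rw [Iset, Finset.card_map, filter_lt_card s m hm]
lemma Aset_card (s m : ℕ) (hm : m ≤ s) : (Aset s m).card = s - m := by
  rw [Aset, Finset.card_map, filter_not_lt_card s m hm]
lemma Bset_card (s m : ℕ) (hm : m ≤ s) : (Bset s m).card = s - m := by
  rw [Bset, Finset.card_map, filter_not_lt_card s m hm]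

lemma countBoth_eq_card (s m : ℕ) :
    countBoth s m =
      (Finset.univ.filter fun G : (Fin s ⊕ Fin s) → Bool =>
        (∑ j ∈ Iset s m, sgn (G j)) + (∑ j ∈ Aset s m, sgn (G j)) = 0 ∧
        (∑ j ∈ Iset s m, sgn (G j)) + (∑ j ∈ Bset s m, sgn (G j)) = 0).card := by
  classical
  rw [countBoth, Finset.card_filter, Finset.card_filter]
  refine Fintype.sum_equiv ((Equiv.sumArrowEquivProdArrow (Fin s) (Fin s) Bool).symm) _ _
    fun p => ?_
  have hG : ∀ i : Fin s,
      ((Equiv.sumArrowEquivProdArrow (Fin s) (Fin s) Bool).symm p) (Sum.inl i) = p.1 i :=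
    fun i => rfl
  have hG' : ∀ i : Fin s,
      ((Equiv.sumArrowEquivProdArrow (Fin s) (Fin s) Bool).symm p) (Sum.inr i) = p.2 i :=
    fun i => rfl
  set G := (Equiv.sumArrowEquivProdArrow (Fin s) (Fin s) Bool).symm p with hGdef
  have e1 : (∑ j ∈ Iset s m, sgn (G j)) = ∑ i ∈ Finset.univ.filter fun i : Fin s => (i:ℕ) < m,
      sgn (p.1 i) := by
    rw [Iset, Finset.sum_map]
    exact Finset.sum_congr rfl fun i _ => by rw [Function.Embedding.coeFn_mk, hG]
  have e2 : (∑ j ∈ Aset s m, sgn (G j)) = ∑ i ∈ Finset.univ.filter fun i : Fin s => ¬ (i:ℕ) < m,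
      sgn (p.1 i) := by
    rw [Aset, Finset.sum_map]
    exact Finset.sum_congr rfl fun i _ => by rw [Function.Embedding.coeFn_mk, hG]
  have e3 : (∑ j ∈ Bset s m, sgn (G j)) = ∑ i ∈ Finset.univ.filter fun i : Fin s => ¬ (i:ℕ) < m,
      sgn (p.2 i) := by
    rw [Bset, Finset.sum_map]
    exact Finset.sum_congr rfl fun i _ => by rw [Function.Embedding.coeFn_mk, hG']
  have c1 : (∑ i : Fin s, (if p.1 i then (1:ℤ) else -1))
      = (∑ j ∈ Iset s m, sgn (G j)) + (∑ j ∈ Aset s m, sgn (G j)) := by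
    rw [e1, e2]
    rw [Finset.sum_filter_add_sum_filter_not Finset.univ (fun i : Fin s => (i:ℕ) < m)
      (fun i => sgn (p.1 i))]
    rfl
  have c2 : (∑ i : Fin s, (if (i : ℕ) < m then (if p.1 i then (1:ℤ) else -1)
        else (if p.2 i then (1:ℤ) else -1)))
      = (∑ j ∈ Iset s m, sgn (G j)) + (∑ j ∈ Bset s m, sgn (G j)) := by
    rw [e1, e3]
    rw [← Finset.sum_filter_add_sum_filter_not Finset.univ (fun i : Fin s => (i:ℕ) < m)
      (fun i => if (i : ℕ) < m then (if p.1 i then (1:ℤ) else -1)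
        else (if p.2 i then (1:ℤ) else -1))]
    congr 1
    · refine Finset.sum_congr rfl fun i hi => ?_
      rw [if_pos (Finset.mem_filter.mp hi).2]
      rfl
    · refine Finset.sum_congr rfl fun i hi => ?_
      rw [if_neg (Finset.mem_filter.mp hi).2]
      rfl
  rw [c1, c2]

lemma Iset_Aset_disj (s m : ℕ) : Disjoint (Iset s m) (Aset s m) := by
  rw [Iset, Aset, Finset.disjoint_map]
  exact Finset.disjoint_filter_filter_not _ _ _
lemma Iset_Bset_disj (s m : ℕ) : Disjoint (Iset s m) (Bset s m) := by
  rw [Finset.disjoint_left]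
  intro x hx hx'
  rw [Iset, Finset.mem_map] at hx
  rw [Bset, Finset.mem_map] at hx'
  obtain ⟨i, -, hi⟩ := hx
  obtain ⟨j, -, hj⟩ := hx'
  rw [← hi] at hj
  simp at hj
lemma Aset_Bset_disj (s m : ℕ) : Disjoint (Aset s m) (Bset s m) := by
  rw [Finset.disjoint_left]
  intro x hx hx'
  rw [Aset, Finset.mem_map] at hx
  rw [Bset, Finset.mem_map] at hx'
  obtain ⟨i, -, hi⟩ := hx
  obtain ⟨j, -, hj⟩ := hx'
  rw [← hi] at hj
  simp at hj

lemma countBoth_key (s m : ℕ) (hm : m ≤ s) :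
    countBoth s m * (2 ^ (m + (s-m) + (s-m)) * 2 ^ (2 * (s + s)))
      = 2 ^ (3 * (s + s)) *
        ∑ v ∈ Finset.Icc (-(s:ℤ)) (s:ℤ),
          Ncnt m v * (Ncnt (s-m) (-v) * Ncnt (s-m) (-v)) := by
  have key := count_pair_conditions (Iset s m) (Aset s m) (Bset s m)
    (Iset_Aset_disj s m) (Iset_Bset_disj s m) (Aset_Bset_disj s m) s
    (by rw [Iset_card s m hm]; exact hm)
  rw [Iset_card s m hm, Aset_card s m hm, Bset_card s m hm] at key
  have hcard : Fintype.card (Fin s ⊕ Fin s) = s + s := by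
    simp [Fintype.card_sum]
  rw [hcard] at key
  rw [countBoth_eq_card s m]
  exact key

lemma W_key {d : ℕ} (s : ℕ) (S T : Finset (Fin d)) (hS : S.card = s) (hT : T.card = s) :
    (Finset.univ.filter fun g : Fin d → Bool =>
        (∑ j ∈ S, sgn (g j)) = 0 ∧ (∑ j ∈ T, sgn (g j)) = 0).card
      * (2 ^ ((S ∩ T).card + (s - (S ∩ T).card) + (s - (S ∩ T).card)) * 2 ^ (2 * d))
      = 2 ^ (3 * d) *
        ∑ v ∈ Finset.Icc (-(s:ℤ)) (s:ℤ),
          Ncnt (S ∩ T).card v * (Ncnt (s - (S ∩ T).card) (-v) * Ncnt (s - (S ∩ T).card) (-v)) := by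
  classical
  set m := (S ∩ T).card with hmdef
  have hm : m ≤ s := by
    rw [hmdef, ← hS]
    exact Finset.card_le_card Finset.inter_subset_left
  have hfilter : (Finset.univ.filter fun g : Fin d → Bool =>
        (∑ j ∈ S, sgn (g j)) = 0 ∧ (∑ j ∈ T, sgn (g j)) = 0)
      = (Finset.univ.filter fun g : Fin d → Bool =>
        (∑ j ∈ S ∩ T, sgn (g j)) + (∑ j ∈ S \ T, sgn (g j)) = 0 ∧
        (∑ j ∈ S ∩ T, sgn (g j)) + (∑ j ∈ T \ S, sgn (g j)) = 0) := by
    refine Finset.filter_congr fun g _ => ?_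
    have e1 : (∑ j ∈ S ∩ T, sgn (g j)) + (∑ j ∈ S \ T, sgn (g j)) = ∑ j ∈ S, sgn (g j) :=
      Finset.sum_inter_add_sum_sdiff S T _
    have e2 : (∑ j ∈ S ∩ T, sgn (g j)) + (∑ j ∈ T \ S, sgn (g j)) = ∑ j ∈ T, sgn (g j) := by
      rw [Finset.inter_comm]
      exact Finset.sum_inter_add_sum_sdiff T S _
    rw [e1, e2]
  have hIA : Disjoint (S ∩ T) (S \ T) := by
    rw [Finset.disjoint_left]
    intro x hx hx'
    exact (Finset.mem_sdiff.mp hx').2 (Finset.mem_inter.mp hx).2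
  have hIB : Disjoint (S ∩ T) (T \ S) := by
    rw [Finset.disjoint_left]
    intro x hx hx'
    exact (Finset.mem_sdiff.mp hx').2 (Finset.mem_inter.mp hx).1
  have hAB : Disjoint (S \ T) (T \ S) := by
    rw [Finset.disjoint_left]
    intro x hx hx'
    exact (Finset.mem_sdiff.mp hx).2 (Finset.mem_sdiff.mp hx').1
  have hA : (S \ T).card = s - m := by
    have := Finset.card_sdiff_add_card_inter S T
    omega
  have hB : (T \ S).card = s - m := by
    have := Finset.card_sdiff_add_card_inter T S
    rw [Finset.inter_comm T S] at this
    omega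
  have key := count_pair_conditions (S ∩ T) (S \ T) (T \ S) hIA hIB hAB s hm
  rw [hA, hB, Fintype.card_fin] at key
  rw [hfilter]
  exact key

/-- Real-valued comparison. -/
lemma W_eq_real {d : ℕ} (s : ℕ) (hsd : s ≤ d) (S T : Finset (Fin d))
    (hS : S.card = s) (hT : T.card = s) :
    ((Finset.univ.filter fun g : Fin d → Bool =>
        (∑ j ∈ S, sgn (g j)) = 0 ∧ (∑ j ∈ T, sgn (g j)) = 0).card : ℝ) * 2 ^ (s + s)
      = (countBoth s ((S ∩ T).card) : ℝ) * 2 ^ d := by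
  set m := (S ∩ T).card with hmdef
  have hm : m ≤ s := by
    rw [hmdef, ← hS]
    exact Finset.card_le_card Finset.inter_subset_left
  set W := (Finset.univ.filter fun g : Fin d → Bool =>
        (∑ j ∈ S, sgn (g j)) = 0 ∧ (∑ j ∈ T, sgn (g j)) = 0).card
  set Q := ∑ v ∈ Finset.Icc (-(s:ℤ)) (s:ℤ),
      Ncnt m v * (Ncnt (s - m) (-v) * Ncnt (s - m) (-v))
  have e1 : (W : ℝ) * (2 ^ (m + (s-m) + (s-m)) * 2 ^ (2 * d)) = 2 ^ (3 * d) * (Q : ℝ) := by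
    exact_mod_cast congrArg (Nat.cast : ℕ → ℝ) (W_key s S T hS hT)
  have e2 : (countBoth s m : ℝ) * (2 ^ (m + (s-m) + (s-m)) * 2 ^ (2 * (s + s)))
      = 2 ^ (3 * (s + s)) * (Q : ℝ) := by
    exact_mod_cast congrArg (Nat.cast : ℕ → ℝ) (countBoth_key s m hm)
  set e := m + (s-m) + (s-m)
  have hc : (0:ℝ) < 2 ^ e * 2 ^ (2 * d) * 2 ^ (2 * (s + s)) := by positivity
  refine mul_right_cancel₀ (ne_of_gt hc) ?_
  calc (W : ℝ) * 2 ^ (s + s) * (2 ^ e * 2 ^ (2 * d) * 2 ^ (2 * (s + s)))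
      = ((W:ℝ) * (2 ^ e * 2 ^ (2 * d))) * (2 ^ (s + s) * 2 ^ (2 * (s + s))) := by ring
    _ = (2 ^ (3 * d) * (Q : ℝ)) * (2 ^ (s + s) * 2 ^ (2 * (s + s))) := by rw [e1]
    _ = ((countBoth s m : ℝ) * (2 ^ e * 2 ^ (2 * (s + s)))) * (2 ^ d * 2 ^ (2 * d)) := by
        rw [e2]; ring
    _ = (countBoth s m : ℝ) * 2 ^ d * (2 ^ e * 2 ^ (2 * d) * 2 ^ (2 * (s + s))) := by ring

lemma countZero_eq_Ncnt (s : ℕ) : countZero s = Ncnt s 0 := rfl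

lemma card_filter_card_eq (d s : ℕ) :
    (Finset.univ.filter fun S : Finset (Fin d) => S.card = s).card = d.choose s := by
  rw [← Finset.powerset_univ, ← Finset.powersetCard_eq_filter, Finset.card_powersetCard,
    Finset.card_univ, Fintype.card_fin]

lemma Xcount_expand (n d s : ℕ) (f : Fin n → Fin d → Bool) :
    (Xcount n d s (signMatrixInt n d (Matrix.of f)) : ℝ)
      = ∑ S : Finset (Fin d),
          if (S.card = s ∧ ∀ i : Fin n, (∑ j ∈ S, sgn (f i j)) = 0) then (1:ℝ) else 0 := by
  rw [Xcount, Finset.sum_boole]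
  norm_cast

-- EX formula
lemma EX_eq (n d s : ℕ) (hsd : s ≤ d) :
    EX n d s = (d.choose s : ℝ) * ((countZero s : ℝ) / 2 ^ s) ^ n := by
  have key : (∑ f : Matrix (Fin n) (Fin d) Bool, (Xcount n d s (signMatrixInt n d f) : ℝ))
      = (d.choose s : ℝ) * ((countZero s : ℝ) * 2 ^ (d - s)) ^ n := by
    rw [sum_matrix (fun f => (Xcount n d s (signMatrixInt n d f) : ℝ))]
    rw [Finset.sum_congr rfl fun f _ => Xcount_expand n d s f]
    rw [Finset.sum_comm]
    have inner : ∀ S : Finset (Fin d),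
        (∑ f : Fin n → Fin d → Bool,
          if (S.card = s ∧ ∀ i : Fin n, (∑ j ∈ S, sgn (f i j)) = 0) then (1:ℝ) else 0)
        = if S.card = s then ((countZero s : ℝ) * 2 ^ (d - s)) ^ n else 0 := by
      intro S
      by_cases hS : S.card = s
      · simp only [hS, true_and, if_pos]
        have hp : ∀ f : Fin n → Fin d → Bool,
            (if (∀ i : Fin n, (∑ j ∈ S, sgn (f i j)) = 0) then (1:ℝ) else 0)
            = ∏ i : Fin n, (if (∑ j ∈ S, sgn (f i j)) = 0 then (1:ℝ) else 0) := by
          intro f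
          by_cases h : ∀ i : Fin n, (∑ j ∈ S, sgn (f i j)) = 0
          · rw [if_pos h]
            exact (Finset.prod_eq_one fun i _ => by rw [if_pos (h i)]).symm
          · rw [if_neg h]
            push_neg at h
            obtain ⟨i, hi⟩ := h
            exact (Finset.prod_eq_zero (Finset.mem_univ i) (by rw [if_neg hi])).symm
        calc (∑ f : Fin n → Fin d → Bool,
                if (∀ i : Fin n, (∑ j ∈ S, sgn (f i j)) = 0) then (1:ℝ) else 0)
            = ∑ f : Fin n → Fin d → Bool,
                ∏ i : Fin n, (if (∑ j ∈ S, sgn (f i j)) = 0 then (1:ℝ) else 0) :=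
              Finset.sum_congr rfl fun f _ => hp f
          _ = (∑ g : Fin d → Bool, if (∑ j ∈ S, sgn (g j)) = 0 then (1:ℝ) else 0) ^ n :=
              rows_count' n d (fun g => if (∑ j ∈ S, sgn (g j)) = 0 then (1:ℝ) else 0)
          _ = ((countZero s : ℝ) * 2 ^ (d - s)) ^ n := by
              congr 1
              rw [Finset.sum_boole, card_filter_sum_restrict S hS 0, Fintype.card_fin,
                countZero_eq_Ncnt]
              push_cast
              ring
      · simp only [hS, false_and, if_false]
        simp
    rw [Finset.sum_congr rfl fun S _ => inner S]
    rw [← Finset.sum_filter, Finset.sum_const, card_filter_card_eq, nsmul_eq_mul]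
  rw [EX, key]
  have h2 : (2:ℝ) ^ (d - s) = 2 ^ d / 2 ^ s := by
    rw [eq_div_iff (by positivity), ← pow_add, Nat.sub_add_cancel hsd]
  rw [h2]
  have hsplit : ((countZero s:ℝ) * ((2:ℝ)^d/2^s)) ^ n
      = ((countZero s:ℝ)/2^s) ^ n * ((2:ℝ)^d)^n := by
    rw [← mul_pow]
    congr 1
    ring
  rw [hsplit, show n*d = d*n from mul_comm n d, pow_mul]
  have hne : ((2:ℝ)^d)^n ≠ 0 := by positivity
  field_simp

lemma EX2_eq (n d s : ℕ) (hsd : s ≤ d) :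
    EX2 n d s = (d.choose s : ℝ) *
      ∑ m ∈ Finset.range (s+1),
        ((s.choose m : ℝ) * ((d-s).choose (s-m) : ℝ)) *
          ((countBoth s m : ℝ) / 2 ^ (2*s)) ^ n := by
  classical
  -- inner W as real number
  set w : ℕ → ℝ := fun m => (countBoth s m : ℝ) * 2 ^ d / 2 ^ (s + s) with hwdef
  have hW : ∀ S T : Finset (Fin d), S.card = s → T.card = s →
      ((Finset.univ.filter fun g : Fin d → Bool =>
        (∑ j ∈ S, sgn (g j)) = 0 ∧ (∑ j ∈ T, sgn (g j)) = 0).card : ℝ) = w ((S ∩ T).card) := by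
    intro S T hS hT
    rw [hwdef]
    have := W_eq_real s hsd S T hS hT
    have h2 : ((2:ℝ) ^ (s + s)) ≠ 0 := by positivity
    field_simp
    linarith [this]
  -- step 1: expand the square
  have key : (∑ f : Matrix (Fin n) (Fin d) Bool, ((Xcount n d s (signMatrixInt n d f) : ℝ)) ^ 2)
      = ∑ S : Finset (Fin d), ∑ T : Finset (Fin d),
          if (S.card = s ∧ T.card = s) then
            (((Finset.univ.filter fun g : Fin d → Bool =>
              (∑ j ∈ S, sgn (g j)) = 0 ∧ (∑ j ∈ T, sgn (g j)) = 0).card : ℝ)) ^ n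
          else 0 := by
    rw [sum_matrix (fun f => ((Xcount n d s (signMatrixInt n d f) : ℝ)) ^ 2)]
    have expand : ∀ f : Fin n → Fin d → Bool,
        ((Xcount n d s (signMatrixInt n d (Matrix.of f)) : ℝ)) ^ 2
        = ∑ S : Finset (Fin d), ∑ T : Finset (Fin d),
            ((if (S.card = s ∧ ∀ i : Fin n, (∑ j ∈ S, sgn (f i j)) = 0) then (1:ℝ) else 0) *
             (if (T.card = s ∧ ∀ i : Fin n, (∑ j ∈ T, sgn (f i j)) = 0) then (1:ℝ) else 0)) := by
      intro f
      rw [sq, Xcount_expand n d s f, Finset.sum_mul_sum]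
    rw [Finset.sum_congr rfl fun f _ => expand f]
    rw [Finset.sum_comm]
    refine Finset.sum_congr rfl fun S _ => ?_
    rw [Finset.sum_comm]
    refine Finset.sum_congr rfl fun T _ => ?_
    by_cases hST : S.card = s ∧ T.card = s
    · rw [if_pos hST]
      obtain ⟨hS, hT⟩ := hST
      have hmerge : ∀ f : Fin n → Fin d → Bool,
          ((if (S.card = s ∧ ∀ i : Fin n, (∑ j ∈ S, sgn (f i j)) = 0) then (1:ℝ) else 0) *
           (if (T.card = s ∧ ∀ i : Fin n, (∑ j ∈ T, sgn (f i j)) = 0) then (1:ℝ) else 0))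
          = ∏ i : Fin n, (if ((∑ j ∈ S, sgn (f i j)) = 0 ∧ (∑ j ∈ T, sgn (f i j)) = 0)
              then (1:ℝ) else 0) := by
        intro f
        by_cases hP : ∀ i : Fin n, (∑ j ∈ S, sgn (f i j)) = 0
        · by_cases hQ : ∀ i : Fin n, (∑ j ∈ T, sgn (f i j)) = 0
          · rw [if_pos ⟨hS, hP⟩, if_pos ⟨hT, hQ⟩, one_mul]
            exact (Finset.prod_eq_one fun i _ => by rw [if_pos ⟨hP i, hQ i⟩]).symm
          · rw [if_neg (show ¬ (T.card = s ∧ ∀ i : Fin n, (∑ j ∈ T, sgn (f i j)) = 0) from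
              fun h => hQ h.2), mul_zero]
            push_neg at hQ
            obtain ⟨i, hi⟩ := hQ
            exact (Finset.prod_eq_zero (Finset.mem_univ i)
              (by rw [if_neg (show ¬ ((∑ j ∈ S, sgn (f i j)) = 0 ∧ (∑ j ∈ T, sgn (f i j)) = 0)
                from fun h => hi h.2)])).symm
        · rw [if_neg (show ¬ (S.card = s ∧ ∀ i : Fin n, (∑ j ∈ S, sgn (f i j)) = 0) from
            fun h => hP h.2), zero_mul]
          push_neg at hP
          obtain ⟨i, hi⟩ := hP
          exact (Finset.prod_eq_zero (Finset.mem_univ i)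
            (by rw [if_neg (show ¬ ((∑ j ∈ S, sgn (f i j)) = 0 ∧ (∑ j ∈ T, sgn (f i j)) = 0)
              from fun h => hi h.1)])).symm
      calc (∑ f : Fin n → Fin d → Bool,
              ((if (S.card = s ∧ ∀ i : Fin n, (∑ j ∈ S, sgn (f i j)) = 0) then (1:ℝ) else 0) *
               (if (T.card = s ∧ ∀ i : Fin n, (∑ j ∈ T, sgn (f i j)) = 0) then (1:ℝ) else 0)))
          = ∑ f : Fin n → Fin d → Bool, ∏ i : Fin n,
              (if ((∑ j ∈ S, sgn (f i j)) = 0 ∧ (∑ j ∈ T, sgn (f i j)) = 0) then (1:ℝ) else 0) :=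
            Finset.sum_congr rfl fun f _ => hmerge f
        _ = (∑ g : Fin d → Bool,
              if ((∑ j ∈ S, sgn (g j)) = 0 ∧ (∑ j ∈ T, sgn (g j)) = 0) then (1:ℝ) else 0) ^ n :=
            rows_count' n d (fun g =>
              if ((∑ j ∈ S, sgn (g j)) = 0 ∧ (∑ j ∈ T, sgn (g j)) = 0) then (1:ℝ) else 0)
        _ = (((Finset.univ.filter fun g : Fin d → Bool =>
              (∑ j ∈ S, sgn (g j)) = 0 ∧ (∑ j ∈ T, sgn (g j)) = 0).card : ℝ)) ^ n := by
            rw [Finset.sum_boole]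
    · rw [if_neg hST]
      rw [not_and_or] at hST
      rcases hST with hS | hT
      · refine Finset.sum_eq_zero fun f _ => ?_
        rw [if_neg (show ¬ (S.card = s ∧ ∀ i : Fin n, (∑ j ∈ S, sgn (f i j)) = 0) from
          fun h => hS h.1), zero_mul]
      · refine Finset.sum_eq_zero fun f _ => ?_
        rw [if_neg (show ¬ (T.card = s ∧ ∀ i : Fin n, (∑ j ∈ T, sgn (f i j)) = 0) from
          fun h => hT h.1), mul_zero]
  -- step 2: group
  rw [EX2, key]
  have inner2 : ∀ S : Finset (Fin d),
      (∑ T : Finset (Fin d), if (S.card = s ∧ T.card = s) then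
        (((Finset.univ.filter fun g : Fin d → Bool =>
          (∑ j ∈ S, sgn (g j)) = 0 ∧ (∑ j ∈ T, sgn (g j)) = 0).card : ℝ)) ^ n else 0)
      = if S.card = s then
          (∑ m ∈ Finset.range (s+1),
            ((s.choose m : ℝ) * ((d-s).choose (s-m) : ℝ)) * (w m) ^ n) else 0 := by
    intro S
    by_cases hS : S.card = s
    · rw [if_pos hS]
      have : ∀ T : Finset (Fin d),
          (if (S.card = s ∧ T.card = s) then
            (((Finset.univ.filter fun g : Fin d → Bool =>
              (∑ j ∈ S, sgn (g j)) = 0 ∧ (∑ j ∈ T, sgn (g j)) = 0).card : ℝ)) ^ n else 0)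
          = if T.card = s then ((fun m => (w m) ^ n) ((S ∩ T).card)) else 0 := by
        intro T
        by_cases hT : T.card = s
        · rw [if_pos ⟨hS, hT⟩, if_pos hT, hW S T hS hT]
        · rw [if_neg (fun h => hT h.2), if_neg hT]
      rw [Finset.sum_congr rfl fun T _ => this T, ← Finset.sum_filter]
      exact group_by_inter s S hS (fun m => (w m) ^ n)
    · rw [if_neg hS]
      refine Finset.sum_eq_zero fun T _ => ?_
      rw [if_neg (fun h => hS h.1)]
  rw [Finset.sum_congr rfl fun S _ => inner2 S, ← Finset.sum_filter, Finset.sum_const,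
    card_filter_card_eq, nsmul_eq_mul]
  -- step 3: algebra
  rw [div_eq_iff (by positivity : ((2:ℝ) ^ (n * d)) ≠ 0), mul_assoc,
    Finset.sum_mul]
  congr 1
  refine Finset.sum_congr rfl fun m _ => ?_
  rw [hwdef]
  have hwn : ((countBoth s m : ℝ) * 2 ^ d / 2 ^ (s + s)) ^ n
      = ((countBoth s m : ℝ) / 2 ^ (2*s)) ^ n * ((2:ℝ)^d) ^ n := by
    rw [← mul_pow]
    congr 1
    rw [show (2:ℝ) ^ (2*s) = 2 ^ (s+s) from by rw [two_mul]]
    ring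
  rw [hwn, show n*d = d*n from mul_comm n d, pow_mul]
  ring

/-- First and second moment formulas: `E[X] = C(d,s)(2^{−s}C(s,s/2))^n` and
`Var[X] = (E[X])² ∑_{m=0}^{s} [C(s,m)C(d−s,s−m)/C(d,s)] (α(s,m)^n − 1)`. -/
theorem moments_of_zero_sum_column_subsets
    (n d s : ℕ) (hn : 0 < n) (hd : 0 < d) (hs : 0 < s) (hse : Even s) (hsd : s ≤ d) :
    EX n d s = (d.choose s : ℝ) * (((s.choose (s / 2) : ℝ)) / 2 ^ s) ^ n ∧
    EX2 n d s - (EX n d s) ^ 2 =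
      (EX n d s) ^ 2 *
        ∑ m ∈ Finset.range (s + 1),
          (((s.choose m : ℝ) * ((d - s).choose (s - m) : ℝ)) / (d.choose s : ℝ)) *
            ((alphaCorr s m) ^ n - 1) := by
  have hEX : EX n d s = (d.choose s : ℝ) * ((countZero s : ℝ) / 2 ^ s) ^ n := EX_eq n d s hsd
  constructor
  · rw [hEX, countZero_choose s hse]
  · set C : ℝ := (d.choose s : ℝ) with hC
    set p : ℝ := (countZero s : ℝ) / 2 ^ s with hp
    set q : ℕ → ℝ := fun m => (countBoth s m : ℝ) / 2 ^ (2*s) with hq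
    set r : ℕ → ℝ := fun m => (s.choose m : ℝ) * ((d-s).choose (s-m) : ℝ) with hr
    have hCpos : (0:ℝ) < C := by
      rw [hC]
      exact_mod_cast Nat.choose_pos hsd
    have hppos : (0:ℝ) < p := by
      rw [hp]
      have : 0 < countZero s := by
        rw [countZero_choose s hse]
        exact Nat.choose_pos (Nat.div_le_self s 2)
      positivity
    have halpha : ∀ m : ℕ, alphaCorr s m = q m / p ^ 2 := fun m => rfl
    have hVan : ∑ m ∈ Finset.range (s+1), r m = C := by
      have hnat : d.choose s = ∑ m ∈ Finset.range (s+1), s.choose m * (d-s).choose (s-m) := by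
        conv_lhs => rw [show d = s + (d - s) from (Nat.add_sub_cancel' hsd).symm]
        rw [Nat.add_choose_eq, Finset.Nat.sum_antidiagonal_eq_sum_range_succ_mk]
      rw [hC, hr, hnat]
      push_cast
      rfl
    have hEX2 : EX2 n d s = C * ∑ m ∈ Finset.range (s+1), r m * (q m) ^ n := EX2_eq n d s hsd
    have hpn : p ^ n ≠ 0 := by positivity
    have hterm : ∀ m ∈ Finset.range (s+1),
        (EX n d s) ^ 2 * ((r m / C) * ((alphaCorr s m) ^ n - 1))
          = C * (r m * (q m) ^ n) - (C * r m) * (C * (p ^ n) ^ 2 / C) := by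
      intro m _
      rw [hEX, halpha m]
      have h1 : (q m / p ^ 2) ^ n = (q m) ^ n / (p ^ n) ^ 2 := by
        rw [div_pow, ← pow_mul, ← pow_mul, mul_comm 2 n, pow_mul]
      rw [h1]
      have hC0 : C ≠ 0 := ne_of_gt hCpos
      field_simp [hC0, hpn]
    calc EX2 n d s - (EX n d s) ^ 2
        = (∑ m ∈ Finset.range (s+1), C * (r m * (q m) ^ n))
          - ∑ m ∈ Finset.range (s+1), (C * r m) * (C * (p ^ n) ^ 2 / C) := by
          rw [hEX2, Finset.mul_sum]
          congr 1
          rw [← Finset.sum_mul, ← Finset.mul_sum, hVan]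
          rw [hEX]
          field_simp
      _ = ∑ m ∈ Finset.range (s+1),
            (C * (r m * (q m) ^ n) - (C * r m) * (C * (p ^ n) ^ 2 / C)) := by
          rw [Finset.sum_sub_distrib]
      _ = ∑ m ∈ Finset.range (s+1),
            (EX n d s) ^ 2 * ((r m / C) * ((alphaCorr s m) ^ n - 1)) :=
          (Finset.sum_congr rfl hterm).symm
      _ = (EX n d s) ^ 2 * ∑ m ∈ Finset.range (s+1),
            (((s.choose m : ℝ) * ((d - s).choose (s - m) : ℝ)) / (d.choose s : ℝ)) *
              ((alphaCorr s m) ^ n - 1) := by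
          rw [Finset.mul_sum]
end
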